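/- arXiv:2405.16614 — 6 statements merged into one kernel-verified Lean document; each statement's English description precedes it below -/
import Mathlib

section
/- Let 0 < β < 1, α > 0, λ > 0. Then the function y ↦ (e^{iξy} − 1)·α·e^{−λy}·y^{−1−β} is integrable on (0,∞) for every real ξ, and ∫₀^∞ (e^{iξy} − 1)·α·e^{−λy}·y^{−1−β} dy = α·Γ(−β)·((λ − iξ)^β − λ^β), where z^β denotes the principal branch of the complex power and Γ is the Gamma function (extended to −β ∈ (−1,0) by the functional equation). -/
/-!
With `z = λ - iξ` the integrand is `α (e^{-zy} - e^{-λy}) y^{-1-β}`. Integrating by parts against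
`-y^{-β}/β` turns `∫ (e^{-zy} - e^{-wy}) y^{-1-β} dy` into `(w K(w) - z K(z))/β` with
`K(c) = ∫ y^{-β} e^{-cy} dy`; the boundary terms vanish because
`|e^{-zy} - e^{-wy}| ≤ |z - w| y e^{-my}` with `m = min(Re z, Re w)`.
The complex Gamma integral `∫ t^{s-1} e^{-ct} dt = Γ(s) c^{-s}` for `Re c > 0` follows from the real
one at `c = 1`: the recursion `c ∫ t^s e^{-ct} dt = s ∫ t^{s-1} e^{-ct} dt` makes the derivative of
`c^s ∫ t^{s-1} e^{-ct} dt` vanish on the right half-plane. Finally `Γ(1-β) = -β Γ(-β)`.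
-/

open MeasureTheory Set Filter Topology
open scoped Complex

namespace TemperedStable

lemma norm_cexp_neg_mul_ofReal (z : ℂ) (t : ℝ) :
    ‖cexp (-(z * t))‖ = Real.exp (-(z.re * t)) := by
  simp [Complex.norm_exp]

lemma integrableOn_rpow_mul_exp_neg_mul {p b : ℝ} (hp : -1 < p) (hb : 0 < b) :
    IntegrableOn (fun t : ℝ => t ^ p * Real.exp (-(b * t))) (Ioi 0) := by
  simpa [Real.rpow_one, neg_mul] using integrableOn_rpow_mul_exp_neg_mul_rpow hp one_pos hb

lemma integrableOn_rpow_mul_cexp_neg_mul {p : ℝ} (hp : -1 < p) {z : ℂ} (hz : 0 < z.re) :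
    IntegrableOn (fun t : ℝ => ((t ^ p : ℝ) : ℂ) * cexp (-(z * t))) (Ioi 0) := by
  refine (integrableOn_rpow_mul_exp_neg_mul hp hz).mono' (by fun_prop) ?_
  filter_upwards [ae_restrict_mem measurableSet_Ioi] with t ht
  rw [norm_mul, norm_cexp_neg_mul_ofReal, Complex.norm_real,
    Real.norm_of_nonneg (Real.rpow_nonneg ht.le p)]

lemma hasDerivAt_cexp_neg_mul_ofReal (z : ℂ) (t : ℝ) :
    HasDerivAt (fun t : ℝ => cexp (-(z * t))) (-z * cexp (-(z * t))) t := by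
  simpa [mul_comm] using (((hasDerivAt_id (t : ℂ)).const_mul z).neg.cexp).comp_ofReal

lemma mul_integral_rpow_mul_cexp_neg_mul {s : ℝ} (hs : 0 < s) {z : ℂ} (hz : 0 < z.re) :
    z * ∫ t in Ioi (0 : ℝ), ((t ^ s : ℝ) : ℂ) * cexp (-(z * t))
      = s * ∫ t in Ioi (0 : ℝ), ((t ^ (s - 1) : ℝ) : ℂ) * cexp (-(z * t)) := by
  have hint₁ := (integrableOn_rpow_mul_cexp_neg_mul (by linarith : -1 < s - 1) hz).const_mul (s : ℂ)
  have hint₂ := (integrableOn_rpow_mul_cexp_neg_mul (by linarith : -1 < s) hz).const_mul (-z)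
  have hFTC := integral_Ioi_of_hasDerivAt_of_tendsto (a := 0) (m := 0)
    (f := fun t : ℝ => ((t ^ s : ℝ) : ℂ) * cexp (-(z * t))) ?cont ?deriv (hint₁.add hint₂) ?lim
  · rw [Pi.add_def, integral_add hint₁ hint₂, integral_const_mul, integral_const_mul] at hFTC
    simp only [Complex.ofReal_zero, Real.zero_rpow hs.ne', zero_mul, sub_zero] at hFTC
    linear_combination -hFTC
  case cont =>
    exact ((Complex.continuous_ofReal.continuousAt.comp
      (Real.continuousAt_rpow_const 0 s (Or.inr hs.le))).mul (by fun_prop)).continuousWithinAt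
  case deriv =>
    intro t ht
    have hpow := ((Real.hasDerivAt_rpow_const (p := s) (Or.inl (ne_of_gt ht))).ofReal_comp)
    refine (hpow.mul (hasDerivAt_cexp_neg_mul_ofReal z t)).congr_deriv ?_
    simp only [Pi.add_apply]
    push_cast
    ring
  case lim =>
    refine squeeze_zero_norm' (a := fun t : ℝ => t ^ s * Real.exp (-z.re * t)) ?_
      (tendsto_rpow_mul_exp_neg_mul_atTop_nhds_zero s _ hz)
    filter_upwards [eventually_gt_atTop (0 : ℝ)] with t ht
    rw [norm_mul, norm_cexp_neg_mul_ofReal, Complex.norm_real,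
      Real.norm_of_nonneg (Real.rpow_nonneg ht.le s), neg_mul]

lemma hasDerivAt_integral_rpow_mul_cexp_neg_mul {s : ℝ} (hs : 0 < s) {z : ℂ} (hz : 0 < z.re) :
    HasDerivAt (fun z : ℂ => ∫ t in Ioi (0 : ℝ), ((t ^ (s - 1) : ℝ) : ℂ) * cexp (-(z * t)))
      (-∫ t in Ioi (0 : ℝ), ((t ^ s : ℝ) : ℂ) * cexp (-(z * t))) z := by
  have hnhds : {w : ℂ | z.re / 2 < w.re} ∈ 𝓝 z :=
    (isOpen_lt continuous_const Complex.continuous_re).mem_nhds (by simp; linarith)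
  rw [← integral_neg]
  refine (hasDerivAt_integral_of_dominated_loc_of_deriv_le (μ := volume.restrict (Ioi 0))
    (F := fun w t => ((t ^ (s - 1) : ℝ) : ℂ) * cexp (-(w * t)))
    (F' := fun w t => -(((t ^ s : ℝ) : ℂ) * cexp (-(w * t))))
    (bound := fun t => t ^ s * Real.exp (-(z.re / 2 * t))) hnhds
    (Eventually.of_forall fun w => by fun_prop)
    (integrableOn_rpow_mul_cexp_neg_mul (by linarith) hz) (by fun_prop) ?_
    (integrableOn_rpow_mul_exp_neg_mul (by linarith) (by linarith)) ?_).2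
  · filter_upwards [ae_restrict_mem measurableSet_Ioi] with t ht w hw
    rw [norm_neg, norm_mul, norm_cexp_neg_mul_ofReal, Complex.norm_real,
      Real.norm_of_nonneg (Real.rpow_nonneg ht.le s)]
    exact mul_le_mul_of_nonneg_left
      (Real.exp_le_exp.2 (by nlinarith [hw.le, mem_Ioi.1 ht])) (Real.rpow_nonneg (le_of_lt ht) s)
  · filter_upwards [ae_restrict_mem measurableSet_Ioi] with t ht w _
    have hexp : HasDerivAt (fun w : ℂ => cexp (-(w * t))) (-t * cexp (-(w * t))) w := by
      simpa [mul_comm] using ((hasDerivAt_id w).mul_const (t : ℂ)).neg.cexp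
    have ht0 : (t : ℂ) ≠ 0 := by exact_mod_cast ne_of_gt ht
    refine (hexp.const_mul ((t ^ (s - 1) : ℝ) : ℂ)).congr_deriv ?_
    rw [Real.rpow_sub_one (ne_of_gt ht)]
    push_cast
    field_simp

theorem integral_rpow_mul_cexp_neg_mul_Ioi {s : ℝ} (hs : 0 < s) {z : ℂ} (hz : 0 < z.re) :
    ∫ t in Ioi (0 : ℝ), ((t ^ (s - 1) : ℝ) : ℂ) * cexp (-(z * t))
      = Real.Gamma s * z ^ (-(s : ℂ)) := by
  set I : ℂ → ℂ := fun z => ∫ t in Ioi (0 : ℝ), ((t ^ (s - 1) : ℝ) : ℂ) * cexp (-(z * t))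
  set H : Set ℂ := {w | 0 < w.re}
  have hderiv : ∀ w ∈ H, HasDerivAt (fun w => w ^ (s : ℂ) * I w) 0 w := by
    intro w hw
    have hw0 : w ≠ 0 := fun h => by simp [H, h] at hw
    refine ((Complex.hasStrictDerivAt_cpow_const (Or.inl hw)).hasDerivAt.mul
      (hasDerivAt_integral_rpow_mul_cexp_neg_mul hs hw)).congr_deriv ?_
    have hrec := mul_integral_rpow_mul_cexp_neg_mul hs hw
    have hsplit : w ^ (s : ℂ) = w ^ ((s : ℂ) - 1) * w := by
      rw [Complex.cpow_sub _ _ hw0, Complex.cpow_one, div_mul_cancel₀ _ hw0]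
    rw [hsplit]
    linear_combination (-w ^ ((s : ℂ) - 1)) * hrec
  have hconst : z ^ (s : ℂ) * I z = (1 : ℂ) ^ (s : ℂ) * I 1 :=
    (isOpen_lt continuous_const Complex.continuous_re).is_const_of_deriv_eq_zero
      (convex_halfSpace_re_gt 0).isPreconnected
      (fun w hw => (hderiv w hw).differentiableAt.differentiableWithinAt)
      (fun w hw => (hderiv w hw).deriv) hz (by simp)
  have hI1 : I 1 = Real.Gamma s := by
    rw [Real.Gamma_eq_integral hs, ← integral_complex_ofReal]
    refine setIntegral_congr_fun measurableSet_Ioi fun t _ => ?_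
    push_cast
    ring_nf
  have hz0 : z ≠ 0 := fun h => by simp [h] at hz
  rw [Complex.one_cpow, one_mul, hI1] at hconst
  rw [← hconst, Complex.cpow_neg, mul_comm (z ^ (s : ℂ)),
    mul_inv_cancel_right₀ (by simp [hz0])]

lemma norm_cexp_neg_mul_sub_le {m : ℝ} {z w : ℂ} (hz : m ≤ z.re) (hw : m ≤ w.re) {y : ℝ}
    (hy : 0 ≤ y) :
    ‖cexp (-(z * y)) - cexp (-(w * y))‖ ≤ y * Real.exp (-(m * y)) * ‖z - w‖ := by
  refine (convex_halfSpace_re_ge m).norm_image_sub_le_of_norm_hasDerivWithin_le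
    (f := fun u : ℂ => cexp (-(u * y))) (f' := fun u => -y * cexp (-(u * y)))
    (fun u _ => ?_) (fun u hu => ?_) hw hz
  · simpa [mul_comm] using (((hasDerivAt_id u).mul_const (y : ℂ)).neg.cexp).hasDerivWithinAt
  · rw [norm_mul, norm_neg, Complex.norm_real, Real.norm_of_nonneg hy,
      norm_cexp_neg_mul_ofReal]
    gcongr
    exact hu

lemma norm_cexp_neg_mul_sub_mul_rpow_le (z w : ℂ) (p : ℝ) {y : ℝ} (hy : 0 < y) :
    ‖(cexp (-(z * y)) - cexp (-(w * y))) * ((y ^ p : ℝ) : ℂ)‖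
      ≤ ‖z - w‖ * (y ^ (p + 1) * Real.exp (-(min z.re w.re * y))) := by
  rw [norm_mul, Complex.norm_real, Real.norm_of_nonneg (Real.rpow_nonneg hy.le _),
    Real.rpow_add_one hy.ne']
  calc ‖cexp (-(z * y)) - cexp (-(w * y))‖ * y ^ p
      ≤ y * Real.exp (-(min z.re w.re * y)) * ‖z - w‖ * y ^ p := by
        gcongr
        exact norm_cexp_neg_mul_sub_le (min_le_left _ _) (min_le_right _ _) hy.le
    _ = _ := by ring

section

variable {z w : ℂ}

lemma tendsto_cexp_neg_mul_sub_mul_rpow_nhdsGT_zero {p : ℝ} (hp : -1 < p) :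
    Tendsto (fun y : ℝ => (cexp (-(z * y)) - cexp (-(w * y))) * ((y ^ p : ℝ) : ℂ))
      (𝓝[>] 0) (𝓝 0) := by
  refine squeeze_zero_norm' (eventually_nhdsWithin_of_forall fun y (hy : 0 < y) =>
    norm_cexp_neg_mul_sub_mul_rpow_le z w p hy) ?_
  have hcont : ContinuousAt
      (fun y : ℝ => ‖z - w‖ * (y ^ (p + 1) * Real.exp (-(min z.re w.re * y)))) 0 :=
    continuousAt_const.mul
      ((Real.continuousAt_rpow_const 0 _ (Or.inr (by linarith))).mul (by fun_prop))
  simpa [Real.zero_rpow (show p + 1 ≠ 0 by linarith)] using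
    hcont.tendsto.mono_left nhdsWithin_le_nhds

lemma tendsto_cexp_neg_mul_sub_mul_rpow_atTop (p : ℝ) (hz : 0 < z.re) (hw : 0 < w.re) :
    Tendsto (fun y : ℝ => (cexp (-(z * y)) - cexp (-(w * y))) * ((y ^ p : ℝ) : ℂ))
      atTop (𝓝 0) := by
  refine squeeze_zero_norm' ((eventually_gt_atTop 0).mono fun y hy =>
    norm_cexp_neg_mul_sub_mul_rpow_le z w p hy) ?_
  simpa [neg_mul] using
    (tendsto_rpow_mul_exp_neg_mul_atTop_nhds_zero (p + 1) _ (lt_min hz hw)).const_mul ‖z - w‖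

lemma integrableOn_cexp_neg_mul_sub_mul_rpow {p : ℝ} (hp : -2 < p) (hz : 0 < z.re)
    (hw : 0 < w.re) :
    IntegrableOn
      (fun y : ℝ => (cexp (-(z * y)) - cexp (-(w * y))) * ((y ^ p : ℝ) : ℂ)) (Ioi 0) := by
  refine ((integrableOn_rpow_mul_exp_neg_mul (p := p + 1) (by linarith) (lt_min hz hw)).const_mul
    ‖z - w‖).mono' (by fun_prop) ?_
  filter_upwards [ae_restrict_mem measurableSet_Ioi] with y (hy : 0 < y)
  exact norm_cexp_neg_mul_sub_mul_rpow_le z w p hy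

variable {β : ℝ}

lemma integral_cexp_neg_mul_sub_mul_rpow_Ioi_eq (hβ0 : 0 < β) (hβ1 : β < 1) (hz : 0 < z.re)
    (hw : 0 < w.re) :
    ∫ y in Ioi (0 : ℝ), (cexp (-(z * y)) - cexp (-(w * y))) * ((y ^ (-1 - β) : ℝ) : ℂ)
      = -(β : ℂ)⁻¹ * (z * (∫ y in Ioi (0 : ℝ), ((y ^ (-β) : ℝ) : ℂ) * cexp (-(z * y)))
          - w * ∫ y in Ioi (0 : ℝ), ((y ^ (-β) : ℝ) : ℂ) * cexp (-(w * y))) := by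
  set u : ℝ → ℂ := fun y => cexp (-(z * y)) - cexp (-(w * y))
  set v : ℝ → ℂ := fun y => -(β : ℂ)⁻¹ * ((y ^ (-β) : ℝ) : ℂ)
  set u' : ℝ → ℂ := fun y => -z * cexp (-(z * y)) - -w * cexp (-(w * y))
  have hβ : (β : ℂ) ≠ 0 := by exact_mod_cast hβ0.ne'
  have hv : ∀ y ∈ Ioi (0 : ℝ), HasDerivAt v ((y ^ (-1 - β) : ℝ) : ℂ) y := fun y hy => by
    refine ((Real.hasDerivAt_rpow_const (p := -β) (Or.inl (ne_of_gt hy))).ofReal_comp.const_mul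
      (-(β : ℂ)⁻¹)).congr_deriv ?_
    rw [show -β - 1 = -1 - β by ring]
    push_cast
    field_simp
  have huv : u * v = fun y => -(β : ℂ)⁻¹ * (u y * ((y ^ (-β) : ℝ) : ℂ)) := by
    ext y
    simp only [v, Pi.mul_apply]
    ring
  have hu'v : u' * v = fun y => (β : ℂ)⁻¹ * (z * (((y ^ (-β) : ℝ) : ℂ) * cexp (-(z * y)))
      - w * (((y ^ (-β) : ℝ) : ℂ) * cexp (-(w * y)))) := by
    ext y
    simp only [v, u', Pi.mul_apply]
    ring
  have h_zero : Tendsto (u * v) (𝓝[>] 0) (𝓝 0) := by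
    rw [huv]
    simpa using (tendsto_cexp_neg_mul_sub_mul_rpow_nhdsGT_zero (z := z) (w := w)
      (by linarith : -1 < -β)).const_mul (-(β : ℂ)⁻¹)
  have h_infty : Tendsto (u * v) atTop (𝓝 0) := by
    rw [huv]
    simpa using (tendsto_cexp_neg_mul_sub_mul_rpow_atTop (-β) hz hw).const_mul (-(β : ℂ)⁻¹)
  have hint_z := (integrableOn_rpow_mul_cexp_neg_mul (p := -β) (by linarith) hz).const_mul z
  have hint_w := (integrableOn_rpow_mul_cexp_neg_mul (p := -β) (by linarith) hw).const_mul w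
  have hibp := integral_Ioi_mul_deriv_eq_deriv_mul (u := u) (u' := u')
    (fun y _ => (hasDerivAt_cexp_neg_mul_ofReal z y).sub (hasDerivAt_cexp_neg_mul_ofReal w y)) hv
    (integrableOn_cexp_neg_mul_sub_mul_rpow (by linarith) hz hw)
    (hu'v ▸ (hint_z.sub hint_w).const_mul _) h_zero h_infty
  rw [hibp, sub_self, zero_sub]
  change -∫ y in Ioi (0 : ℝ), (u' * v) y = _
  rw [hu'v, integral_const_mul, integral_sub hint_z hint_w, integral_const_mul,
    integral_const_mul, neg_mul]

lemma mul_integral_rpow_neg_mul_cexp_neg_mul (hβ : β < 1) {c : ℂ} (hc : 0 < c.re) :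
    c * ∫ y in Ioi (0 : ℝ), ((y ^ (-β) : ℝ) : ℂ) * cexp (-(c * y))
      = Real.Gamma (1 - β) * c ^ (β : ℂ) := by
  have hc0 : c ≠ 0 := fun h => by simp [h] at hc
  have hGamma := integral_rpow_mul_cexp_neg_mul_Ioi (s := 1 - β) (by linarith) hc
  rw [sub_sub_cancel_left] at hGamma
  rw [hGamma]
  push_cast
  rw [neg_sub, Complex.cpow_sub _ _ hc0, Complex.cpow_one]
  field_simp

theorem integral_cexp_neg_mul_sub_mul_rpow_Ioi (hβ0 : 0 < β) (hβ1 : β < 1) (hz : 0 < z.re)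
    (hw : 0 < w.re) :
    ∫ y in Ioi (0 : ℝ), (cexp (-(z * y)) - cexp (-(w * y))) * ((y ^ (-1 - β) : ℝ) : ℂ)
      = Real.Gamma (-β) * (z ^ (β : ℂ) - w ^ (β : ℂ)) := by
  have hGamma_one_sub : Real.Gamma (1 - β) = -β * Real.Gamma (-β) := by
    simpa [neg_add_eq_sub] using Real.Gamma_add_one (s := -β) (by linarith)
  have hβ : (β : ℂ) ≠ 0 := by exact_mod_cast hβ0.ne'
  rw [integral_cexp_neg_mul_sub_mul_rpow_Ioi_eq hβ0 hβ1 hz hw,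
    mul_integral_rpow_neg_mul_cexp_neg_mul hβ1 hz, mul_integral_rpow_neg_mul_cexp_neg_mul hβ1 hw,
    hGamma_one_sub]
  push_cast
  field_simp
  ring

end

end TemperedStable

open TemperedStable in
theorem tempered_stable_char_exponent_general (β α lam : ℝ) (hβ0 : 0 < β) (hβ1 : β < 1)
    (hlam : 0 < lam) (ξ : ℝ) :
    IntegrableOn (fun y : ℝ =>
        (Complex.exp (Complex.I * ξ * y) - 1) *
          ((α * Real.exp (-lam * y) * y ^ (-1 - β) : ℝ) : ℂ)) (Ioi 0) ∧
    ∫ y in Ioi (0 : ℝ),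
        (Complex.exp (Complex.I * ξ * y) - 1) *
          ((α * Real.exp (-lam * y) * y ^ (-1 - β) : ℝ) : ℂ)
      = (α : ℂ) * (Real.Gamma (-β) : ℂ) *
          (((lam : ℂ) - Complex.I * ξ) ^ (β : ℂ) - (lam : ℂ) ^ (β : ℂ)) := by
  have hz : 0 < ((lam : ℂ) - Complex.I * ξ).re := by simpa using hlam
  have hw : 0 < (lam : ℂ).re := by simpa using hlam
  have hintegrand : (fun y : ℝ => (Complex.exp (Complex.I * ξ * y) - 1) *
        ((α * Real.exp (-lam * y) * y ^ (-1 - β) : ℝ) : ℂ))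
      = fun y : ℝ => (α : ℂ) * ((cexp (-(((lam : ℂ) - Complex.I * ξ) * y))
          - cexp (-((lam : ℂ) * y))) * ((y ^ (-1 - β) : ℝ) : ℂ)) := by
    ext y
    have hsplit : cexp (-(((lam : ℂ) - Complex.I * ξ) * y))
        = cexp (Complex.I * ξ * y) * cexp (-((lam : ℂ) * y)) := by
      rw [← Complex.exp_add]
      ring_nf
    rw [hsplit]
    push_cast
    rw [neg_mul]
    ring
  rw [hintegrand, integral_const_mul, integral_cexp_neg_mul_sub_mul_rpow_Ioi hβ0 hβ1 hz hw]
  exact ⟨(integrableOn_cexp_neg_mul_sub_mul_rpow (by linarith) hz hw).const_mul _, by ring⟩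

/-- The one-sided tempered stable Lévy density integrated against `e^{iξy} − 1`:
integrability on `(0,∞)` and the closed form `α Γ(−β) ((λ − iξ)^β − λ^β)`. -/
theorem tempered_stable_char_exponent (β α lam : ℝ) (hβ0 : 0 < β) (hβ1 : β < 1)
    (hα : 0 < α) (hlam : 0 < lam) (ξ : ℝ) :
    IntegrableOn (fun y : ℝ =>
        (Complex.exp (Complex.I * ξ * y) - 1) *
          ((α * Real.exp (-lam * y) * y ^ (-1 - β) : ℝ) : ℂ)) (Ioi 0) ∧
    ∫ y in Ioi (0 : ℝ),
        (Complex.exp (Complex.I * ξ * y) - 1) *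
          ((α * Real.exp (-lam * y) * y ^ (-1 - β) : ℝ) : ℂ)
      = (α : ℂ) * (Real.Gamma (-β) : ℂ) *
          (((lam : ℂ) - Complex.I * ξ) ^ (β : ℂ) - (lam : ℂ) ^ (β : ℂ)) :=
  tempered_stable_char_exponent_general β α lam hβ0 hβ1 hlam ξ
end

section
/- Let 0 < β₊ < 1, 0 < β₋ < 1, α₊, α₋ > 0, λ₊, λ₋ > 0, μ ∈ ℝ. For every real ξ, μξi + ∫₀^∞ (e^{iξy} − 1)·α₊·e^{−λ₊y}·y^{−1−β₊} dy + ∫₀^∞ (e^{−iξy} − 1)·α₋·e^{−λ₋y}·y^{−1−β₋} dy = μξi + α₊·Γ(−β₊)·((λ₊ − iξ)^{β₊} − λ₊^{β₊}) + α₋·Γ(−β₋)·((λ₋ + iξ)^{β₋} − λ₋^{β₋}). -/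
/-!
Write `z = λ - iξ`, so that the positive-jump integrand is `(e^{-zy} - e^{-λy}) y^{-1-β}`.
Differentiating in `ξ` under the integral sign gives `i ∫ y^{-β} e^{-zy} dy = i Γ(1-β) z^{β-1}`,
which by `Γ(1-β) = -β Γ(-β)` is also the `ξ`-derivative of `Γ(-β) (z^β - λ^β)`; both sides vanish
at `ξ = 0`. The Gamma integral with complex rate `z` is obtained the same way: integration by parts
shows that `z ↦ z^s ∫ y^{s-1} e^{-zy} dy` has zero complex derivative on the half-plane `re z > 0`,
so it equals its value `Γ(s)` at `z = 1`. The negative jumps are the positive ones at `-ξ`.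
-/

open MeasureTheory Set Complex Filter Topology
open scoped Real

section GammaIntegral

variable {s : ℝ} {z : ℂ}

lemma norm_rpow_mul_cexp_neg_mul {y : ℝ} (hy : 0 ≤ y) (s : ℝ) (z : ℂ) :
    ‖((y ^ s : ℝ) : ℂ) * cexp (-(z * y))‖ = y ^ s * rexp (-(z.re * y)) := by
  rw [norm_mul, norm_real, Real.norm_of_nonneg (Real.rpow_nonneg hy s), norm_exp]
  simp

lemma integrableOn_rpow_mul_exp_neg_mul {b : ℝ} (hs : -1 < s) (hb : 0 < b) :
    IntegrableOn (fun y : ℝ ↦ y ^ s * rexp (-(b * y))) (Ioi 0) := by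
  simpa using integrableOn_rpow_mul_exp_neg_mul_rpow hs one_pos hb

lemma integrableOn_rpow_mul_cexp_neg_mul (hs : -1 < s) (hz : 0 < z.re) :
    IntegrableOn (fun y : ℝ ↦ ((y ^ s : ℝ) : ℂ) * cexp (-(z * y))) (Ioi 0) := by
  refine (integrableOn_rpow_mul_exp_neg_mul hs hz).mono' (by fun_prop) ?_
  filter_upwards [ae_restrict_mem measurableSet_Ioi] with y hy
  exact (norm_rpow_mul_cexp_neg_mul (le_of_lt hy) s z).le

lemma mul_integral_rpow_mul_cexp_neg_mul (hs : 0 < s) (hz : 0 < z.re) :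
    z * ∫ y in Ioi (0 : ℝ), ((y ^ s : ℝ) : ℂ) * cexp (-(z * y))
      = s * ∫ y in Ioi (0 : ℝ), ((y ^ (s - 1) : ℝ) : ℂ) * cexp (-(z * y)) := by
  set f : ℝ → ℂ := fun y ↦ ((y ^ s : ℝ) : ℂ) * cexp (-(z * y))
  have hderiv : ∀ y ∈ Ioi (0 : ℝ), HasDerivAt f
      (s * (((y ^ (s - 1) : ℝ) : ℂ) * cexp (-(z * y))) - z * f y) y := by
    intro y hy
    have hpow := (Real.hasDerivAt_rpow_const (p := s) (Or.inl (ne_of_gt hy))).ofReal_comp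
    have hexp : HasDerivAt (fun y : ℝ ↦ cexp (-(z * y))) (cexp (-(z * y)) * -z) y := by
      simpa using (((hasDerivAt_id (y : ℂ)).const_mul z).neg.cexp).comp_ofReal
    refine (hpow.mul hexp).congr_deriv ?_
    simp only [f]
    push_cast
    ring
  have hcont : ContinuousWithinAt f (Ici 0) 0 :=
    ((continuous_ofReal.continuousAt.comp
      (Real.continuousAt_rpow_const 0 s (Or.inr hs.le))).mul (by fun_prop)).continuousWithinAt
  have hint₁ := (integrableOn_rpow_mul_cexp_neg_mul (s := s - 1) (by linarith) hz).const_mul (s : ℂ)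
  have hint₂ : IntegrableOn (fun y ↦ z * f y) (Ioi 0) :=
    (integrableOn_rpow_mul_cexp_neg_mul (s := s) (by linarith) hz).const_mul z
  have hlim : Tendsto f atTop (𝓝 0) := by
    rw [tendsto_zero_iff_norm_tendsto_zero]
    refine (tendsto_rpow_mul_exp_neg_mul_atTop_nhds_zero s z.re hz).congr' ?_
    filter_upwards [eventually_ge_atTop 0] with y hy
    rw [norm_rpow_mul_cexp_neg_mul hy, neg_mul]
  have hftc := integral_Ioi_of_hasDerivAt_of_tendsto hcont hderiv (hint₁.sub hint₂) hlim
  rw [integral_sub hint₁ hint₂, integral_const_mul, integral_const_mul] at hftc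
  simp only [f, ofReal_zero, Real.zero_rpow hs.ne', zero_mul, sub_zero] at hftc
  linear_combination -hftc

lemma hasDerivAt_integral_rpow_mul_cexp_neg_mul (hs : -1 < s) (hz : 0 < z.re) :
    HasDerivAt (fun w : ℂ ↦ ∫ y in Ioi (0 : ℝ), ((y ^ s : ℝ) : ℂ) * cexp (-(w * y)))
      (-∫ y in Ioi (0 : ℝ), ((y ^ (s + 1) : ℝ) : ℂ) * cexp (-(z * y))) z := by
  have hnhds : {w : ℂ | z.re / 2 < w.re} ∈ 𝓝 z :=
    (isOpen_lt continuous_const continuous_re).mem_nhds (by simp only [mem_ofPred_eq]; linarith)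
  have hderiv : ∀ y : ℝ, 0 < y → ∀ w : ℂ,
      HasDerivAt (fun w : ℂ ↦ ((y ^ s : ℝ) : ℂ) * cexp (-(w * y)))
        (-(((y ^ (s + 1) : ℝ) : ℂ) * cexp (-(w * y)))) w := by
    intro y hy w
    have hlin : HasDerivAt (fun w : ℂ ↦ -(w * y)) (-(y : ℂ)) w := by
      simpa using ((hasDerivAt_id w).mul_const (y : ℂ)).fun_neg
    refine (hlin.cexp.const_mul _).congr_deriv ?_
    rw [Real.rpow_add_one hy.ne']
    push_cast
    ring
  have hmain := hasDerivAt_integral_of_dominated_loc_of_deriv_le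
    (F' := fun w y ↦ -(((y ^ (s + 1) : ℝ) : ℂ) * cexp (-(w * y))))
    (bound := fun y ↦ y ^ (s + 1) * rexp (-(z.re / 2 * y))) hnhds
    (Eventually.of_forall fun w ↦ (by fun_prop : Measurable fun y : ℝ ↦
      ((y ^ s : ℝ) : ℂ) * cexp (-(w * y))).aestronglyMeasurable)
    (integrableOn_rpow_mul_cexp_neg_mul hs hz)
    (by fun_prop : Measurable fun y : ℝ ↦
      -(((y ^ (s + 1) : ℝ) : ℂ) * cexp (-(z * y)))).aestronglyMeasurable
    ?_ (integrableOn_rpow_mul_exp_neg_mul (by linarith) (half_pos hz)) ?_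
  · rw [← integral_neg]
    exact hmain.2
  · filter_upwards [ae_restrict_mem measurableSet_Ioi] with y hy w hw
    rw [norm_neg, norm_rpow_mul_cexp_neg_mul (le_of_lt hy)]
    have hy0 : 0 ≤ y := le_of_lt hy
    gcongr
  · filter_upwards [ae_restrict_mem measurableSet_Ioi] with y hy w _
    exact hderiv y hy w

theorem integral_rpow_mul_cexp_neg_mul_Ioi (hs : 0 < s) (hz : 0 < z.re) :
    ∫ y in Ioi (0 : ℝ), ((y ^ (s - 1) : ℝ) : ℂ) * cexp (-(z * y)) = Real.Gamma s / z ^ (s : ℂ) := by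
  set Φ : ℂ → ℂ := fun w ↦
    (∫ y in Ioi (0 : ℝ), ((y ^ (s - 1) : ℝ) : ℂ) * cexp (-(w * y))) * w ^ (s : ℂ)
  have hΦ : ∀ w : ℂ, 0 < w.re → HasDerivAt Φ 0 w := by
    intro w hw
    have hw0 : w ≠ 0 := fun h ↦ by simp [h] at hw
    have hint := hasDerivAt_integral_rpow_mul_cexp_neg_mul (s := s - 1) (by linarith) hw
    rw [sub_add_cancel] at hint
    have hpow := (hasStrictDerivAt_cpow_const (c := (s : ℂ))
      (mem_slitPlane_iff.2 (Or.inl hw))).hasDerivAt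
    refine (hint.mul hpow).congr_deriv ?_
    have hsplit : w ^ (s : ℂ) = w ^ ((s : ℂ) - 1) * w := by
      rw [cpow_sub _ _ hw0, cpow_one, div_mul_cancel₀ _ hw0]
    rw [hsplit]
    linear_combination (-(w ^ ((s : ℂ) - 1))) * mul_integral_rpow_mul_cexp_neg_mul hs hw
  have hΦ1 : Φ 1 = Real.Gamma s := by
    simp only [Φ, one_cpow, mul_one, one_mul, Real.Gamma_eq_integral hs]
    rw [← integral_complex_ofReal]
    refine setIntegral_congr_fun measurableSet_Ioi fun y _ ↦ ?_
    push_cast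
    ring
  have hconst : Φ z = Φ 1 :=
    (isOpen_lt continuous_const continuous_re).is_const_of_deriv_eq_zero
      (convex_halfSpace_re_gt 0).isPreconnected
      (fun w hw ↦ (hΦ w hw).differentiableAt.differentiableWithinAt)
      (fun w hw ↦ (hΦ w hw).deriv) hz (by simp)
  have hz0 : z ^ (s : ℂ) ≠ 0 := cpow_ne_zero_iff.2 (Or.inl fun h ↦ by simp [h] at hz)
  rw [eq_div_iff hz0, ← hΦ1, ← hconst]

end GammaIntegral

section TemperedStable

variable {β lam : ℝ}

lemma norm_cexp_I_mul_sub_one_mul_exp_neg_mul_rpow_le {y : ℝ} (hy : 0 < y) (β lam ξ : ℝ) :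
    ‖(cexp (I * ξ * y) - 1) * ((rexp (-lam * y) * y ^ (-1 - β) : ℝ) : ℂ)‖
      ≤ |ξ| * (y ^ (-β) * rexp (-(lam * y))) := by
  have hosc : ‖cexp (I * ξ * y) - 1‖ ≤ |ξ| * y := by
    simpa [mul_assoc, abs_mul, abs_of_pos hy] using
      Real.norm_exp_I_mul_ofReal_sub_one_le (x := ξ * y)
  rw [norm_mul, norm_real, Real.norm_of_nonneg (by positivity)]
  calc _ ≤ (|ξ| * y) * (rexp (-lam * y) * y ^ (-1 - β)) := by gcongr
    _ = _ := by
      rw [show -β = 1 + (-1 - β) by ring, Real.rpow_add hy, Real.rpow_one, neg_mul]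
      ring

lemma integrableOn_cexp_I_mul_sub_one_mul_exp_neg_mul_rpow (hβ : β < 1) (hl : 0 < lam) (ξ : ℝ) :
    IntegrableOn (fun y : ℝ ↦ (cexp (I * ξ * y) - 1) * ((rexp (-lam * y) * y ^ (-1 - β) : ℝ) : ℂ))
      (Ioi 0) := by
  refine ((integrableOn_rpow_mul_exp_neg_mul (s := -β) (by linarith) hl).const_mul |ξ|).mono'
    (by fun_prop) ?_
  filter_upwards [ae_restrict_mem measurableSet_Ioi] with y hy
  exact norm_cexp_I_mul_sub_one_mul_exp_neg_mul_rpow_le hy β lam ξ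

lemma hasDerivAt_integral_cexp_I_mul_sub_one_mul_exp_neg_mul_rpow (hβ : β < 1) (hl : 0 < lam)
    (ξ : ℝ) :
    HasDerivAt (fun ξ : ℝ ↦ ∫ y in Ioi (0 : ℝ),
        (cexp (I * ξ * y) - 1) * ((rexp (-lam * y) * y ^ (-1 - β) : ℝ) : ℂ))
      (I * ∫ y in Ioi (0 : ℝ), ((y ^ (-β) : ℝ) : ℂ) * cexp (-((lam - I * ξ) * y))) ξ := by
  have hderiv : ∀ y : ℝ, 0 < y → ∀ x : ℝ,
      HasDerivAt (fun x : ℝ ↦ (cexp (I * x * y) - 1) * ((rexp (-lam * y) * y ^ (-1 - β) : ℝ) : ℂ))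
        (I * (((y ^ (-β) : ℝ) : ℂ) * cexp (-((lam - I * x) * y)))) x := by
    intro y hy x
    have hlin : HasDerivAt (fun x : ℝ ↦ I * x * y) (I * y) x := by
      simpa using ((hasDerivAt_id (x : ℂ)).const_mul I |>.mul_const (y : ℂ)).comp_ofReal
    refine ((hlin.cexp.sub_const 1).mul_const _).congr_deriv ?_
    have hexp : cexp (-((lam - I * x) * y)) = cexp (I * x * y) * cexp ((-lam * y : ℝ) : ℂ) := by
      rw [← Complex.exp_add]
      push_cast
      ring_nf
    rw [hexp, show -β = 1 + (-1 - β) by ring, Real.rpow_add hy, Real.rpow_one]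
    push_cast
    ring
  have hmain := hasDerivAt_integral_of_dominated_loc_of_deriv_le
    (F' := fun x y ↦ I * (((y ^ (-β) : ℝ) : ℂ) * cexp (-((lam - I * x) * y))))
    (bound := fun y ↦ y ^ (-β) * rexp (-(lam * y))) (x₀ := ξ) univ_mem
    (Eventually.of_forall fun x ↦ (by fun_prop : Measurable fun y : ℝ ↦
      (cexp (I * x * y) - 1) * ((rexp (-lam * y) * y ^ (-1 - β) : ℝ) : ℂ)).aestronglyMeasurable)
    (integrableOn_cexp_I_mul_sub_one_mul_exp_neg_mul_rpow hβ hl ξ)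
    (by fun_prop : Measurable fun y : ℝ ↦
      I * (((y ^ (-β) : ℝ) : ℂ) * cexp (-((lam - I * ξ) * y)))).aestronglyMeasurable
    ?_ (integrableOn_rpow_mul_exp_neg_mul (by linarith) hl) ?_
  · rw [← integral_const_mul]
    exact hmain.2
  · filter_upwards [ae_restrict_mem measurableSet_Ioi] with y hy x _
    rw [norm_mul, norm_I, one_mul, norm_rpow_mul_cexp_neg_mul (le_of_lt hy)]
    simp
  · filter_upwards [ae_restrict_mem measurableSet_Ioi] with y hy x _
    exact hderiv y hy x

theorem integral_cexp_I_mul_sub_one_mul_exp_neg_mul_rpow_Ioi (hβ0 : 0 < β) (hβ1 : β < 1)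
    (hl : 0 < lam) (ξ : ℝ) :
    ∫ y in Ioi (0 : ℝ), (cexp (I * ξ * y) - 1) * ((rexp (-lam * y) * y ^ (-1 - β) : ℝ) : ℂ)
      = Real.Gamma (-β) * ((lam - I * ξ) ^ (β : ℂ) - (lam : ℂ) ^ (β : ℂ)) := by
  have hre : ∀ x : ℝ, 0 < ((lam : ℂ) - I * x).re := fun x ↦ by simpa using hl
  have hGamma : Real.Gamma (1 - β) = -β * Real.Gamma (-β) := by
    rw [show 1 - β = -β + 1 by ring, Real.Gamma_add_one (neg_ne_zero.2 hβ0.ne')]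
  have hpow : ∀ x : ℝ, HasDerivAt (fun x : ℝ ↦ ((lam : ℂ) - I * x) ^ (β : ℂ))
      (β * ((lam : ℂ) - I * x) ^ ((β : ℂ) - 1) * -I) x := fun x ↦ by
    have hlin : HasDerivAt (fun w : ℂ ↦ (lam : ℂ) - I * w) (-I) x := by
      simpa using ((hasDerivAt_id (x : ℂ)).const_mul I).const_sub (lam : ℂ)
    exact (hlin.cpow_const (mem_slitPlane_iff.2 (Or.inl (hre x)))).comp_ofReal
  have hderiv : ∀ x : ℝ, HasDerivAt
      (fun x : ℝ ↦ Real.Gamma (-β) * (((lam : ℂ) - I * x) ^ (β : ℂ) - (lam : ℂ) ^ (β : ℂ)))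
      (I * ∫ y in Ioi (0 : ℝ), ((y ^ (-β) : ℝ) : ℂ) * cexp (-((lam - I * x) * y))) x := fun x ↦ by
    refine (((hpow x).sub_const _).const_mul _).congr_deriv ?_
    have hΓ := integral_rpow_mul_cexp_neg_mul_Ioi (s := 1 - β) (by linarith) (hre x)
    rw [sub_sub_cancel_left] at hΓ
    rw [hΓ, show (β : ℂ) - 1 = -((1 - β : ℝ) : ℂ) by push_cast; ring, cpow_neg, hGamma]
    field_simp
    push_cast
    ring
  have hint := hasDerivAt_integral_cexp_I_mul_sub_one_mul_exp_neg_mul_rpow hβ1 hl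
  refine isOpen_univ.eqOn_of_deriv_eq isPreconnected_univ
    (fun x _ ↦ (hint x).differentiableAt.differentiableWithinAt)
    (fun x _ ↦ (hderiv x).differentiableAt.differentiableWithinAt)
    (fun x _ ↦ by rw [(hint x).deriv, (hderiv x).deriv]) (mem_univ 0) (by simp) (mem_univ ξ)

end TemperedStable

theorem GTS_char_exponent_general (βp βm αp αm lamp lamm μ : ℝ)
    (hβp0 : 0 < βp) (hβp1 : βp < 1) (hβm0 : 0 < βm) (hβm1 : βm < 1)
    (hlamp : 0 < lamp) (hlamm : 0 < lamm) (ξ : ℝ) :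
    (μ * ξ : ℂ) * Complex.I
      + (∫ y in Ioi (0 : ℝ),
          (Complex.exp (Complex.I * ξ * y) - 1) *
            ((αp * Real.exp (-lamp * y) * y ^ (-1 - βp) : ℝ) : ℂ))
      + (∫ y in Ioi (0 : ℝ),
          (Complex.exp (-(Complex.I * ξ * y)) - 1) *
            ((αm * Real.exp (-lamm * y) * y ^ (-1 - βm) : ℝ) : ℂ))
    = (μ * ξ : ℂ) * Complex.I
      + (αp : ℂ) * (Real.Gamma (-βp) : ℂ) *
          (((lamp : ℂ) - Complex.I * ξ) ^ (βp : ℂ) - (lamp : ℂ) ^ (βp : ℂ))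
      + (αm : ℂ) * (Real.Gamma (-βm) : ℂ) *
          (((lamm : ℂ) + Complex.I * ξ) ^ (βm : ℂ) - (lamm : ℂ) ^ (βm : ℂ)) := by
  have hscale : ∀ (α β lam ξ : ℝ),
      ∫ y in Ioi (0 : ℝ), (cexp (I * ξ * y) - 1) * ((α * rexp (-lam * y) * y ^ (-1 - β) : ℝ) : ℂ)
        = α * ∫ y in Ioi (0 : ℝ),
          (cexp (I * ξ * y) - 1) * ((rexp (-lam * y) * y ^ (-1 - β) : ℝ) : ℂ) :=
    fun α β lam ξ ↦ by
      rw [← integral_const_mul]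
      congr 1 with y
      push_cast
      ring
  have hneg : ∀ y : ℝ, -(I * ξ * y) = I * ((-ξ : ℝ) : ℂ) * y := fun y ↦ by push_cast; ring
  simp only [hneg, hscale, integral_cexp_I_mul_sub_one_mul_exp_neg_mul_rpow_Ioi hβp0 hβp1 hlamp,
    integral_cexp_I_mul_sub_one_mul_exp_neg_mul_rpow_Ioi hβm0 hβm1 hlamm]
  rw [show (lamm : ℂ) - I * ((-ξ : ℝ) : ℂ) = lamm + I * ξ by push_cast; ring]
  ring

/-- The characteristic exponent of the Generalized Tempered Stable distribution:
`μξi + ∫ (e^{iξy}−1) M₊(dy) + ∫ (e^{−iξy}−1) M₋(dy)` equals the closed form. -/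
theorem GTS_char_exponent (βp βm αp αm lamp lamm μ : ℝ)
    (hβp0 : 0 < βp) (hβp1 : βp < 1) (hβm0 : 0 < βm) (hβm1 : βm < 1)
    (hαp : 0 < αp) (hαm : 0 < αm) (hlamp : 0 < lamp) (hlamm : 0 < lamm) (ξ : ℝ) :
    (μ * ξ : ℂ) * Complex.I
      + (∫ y in Ioi (0 : ℝ),
          (Complex.exp (Complex.I * ξ * y) - 1) *
            ((αp * Real.exp (-lamp * y) * y ^ (-1 - βp) : ℝ) : ℂ))
      + (∫ y in Ioi (0 : ℝ),
          (Complex.exp (-(Complex.I * ξ * y)) - 1) *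
            ((αm * Real.exp (-lamm * y) * y ^ (-1 - βm) : ℝ) : ℂ))
    = (μ * ξ : ℂ) * Complex.I
      + (αp : ℂ) * (Real.Gamma (-βp) : ℂ) *
          (((lamp : ℂ) - Complex.I * ξ) ^ (βp : ℂ) - (lamp : ℂ) ^ (βp : ℂ))
      + (αm : ℂ) * (Real.Gamma (-βm) : ℂ) *
          (((lamm : ℂ) + Complex.I * ξ) ^ (βm : ℂ) - (lamm : ℂ) ^ (βm : ℂ)) :=
  GTS_char_exponent_general βp βm αp αm lamp lamm μ hβp0 hβp1 hβm0 hβm1 hlamp hlamm ξ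
end

section
/- Let 0 < β < 1, α > 0, λ > 0. For every real x, the function v ↦ (e^{ivx} − 1)·α·(β + λv)·v^{−1−β}·e^{−λv} is integrable on (0,∞) and ∫₀^∞ (e^{ivx} − 1)·α·(β + λv)·v^{−1−β}·e^{−λv} dv = α·Γ(1−β)·(ix)/(λ − ix)^{1−β}, where (λ − ix)^{1−β} is the principal branch of the complex power. -/
/-!
The Lévy density is `-W'` for the tail `W v = α v^{-β} e^{-λv}`. Integrating by parts, with
boundary terms that vanish because `|e^{ixv} - 1| ≤ |x| v` near `0` and `W` decays at `∞`, the
integral becomes `ix ∫₀^∞ e^{ixv} W v dv = ixα ∫₀^∞ v^{-β} e^{-(λ - ix)v} dv`. This is a Gamma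
integral at the complex scale `s = λ - ix`: `∫₀^∞ t^{a-1} e^{-st} dt = Γ(a) s^{-a}` holds for real
`s > 0` and extends to `Re s > 0` by analytic continuation, the left side being the `complexMGF`
of the measure `t^{a-1} dt` on `(0, ∞)`.
-/

open MeasureTheory Set Filter Topology ProbabilityTheory Complex

lemma integrableOn_rpow_mul_exp_neg_mul_s7 {s c : ℝ} (hs : -1 < s) (hc : 0 < c) :
    IntegrableOn (fun t : ℝ => t ^ s * Real.exp (-c * t)) (Ioi 0) := by
  simpa using integrableOn_rpow_mul_exp_neg_mul_rpow hs one_pos hc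

lemma tendsto_rpow_mul_exp_neg_mul_nhdsGT_zero {s : ℝ} (hs : 0 < s) (c : ℝ) :
    Tendsto (fun t : ℝ => t ^ s * Real.exp (-c * t)) (𝓝[>] 0) (𝓝 0) := by
  have h : ContinuousAt (fun t : ℝ => t ^ s * Real.exp (-c * t)) 0 :=
    (Real.continuousAt_rpow_const _ _ (Or.inr hs.le)).mul (by fun_prop)
  simpa [Real.zero_rpow hs.ne'] using h.tendsto.mono_left nhdsWithin_le_nhds

lemma frequently_nhdsNE_ofReal {P : ℂ → Prop} {x : ℝ} (h : ∀ᶠ r : ℝ in 𝓝 x, P r) :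
    ∃ᶠ z in 𝓝[≠] (x : ℂ), P z := by
  have hreal : Tendsto ofReal (𝓝[≠] x) (𝓝[≠] (x : ℂ)) :=
    tendsto_nhdsWithin_of_tendsto_nhds_of_eventually_within _
      ((continuous_ofReal.tendsto x).mono_left nhdsWithin_le_nhds)
      (eventually_nhdsWithin_of_forall fun r hr => by simpa using hr)
  exact hreal.frequently (eventually_nhdsWithin_of_eventually_nhds h).frequently

lemma rpow_neg_eq_mul_rpow_neg_one_sub {β v : ℝ} (hv : 0 < v) : v ^ (-β) = v * v ^ (-1 - β) := by
  rw [mul_comm, ← Real.rpow_add_one hv.ne']; ring_nf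

lemma norm_cexp_I_mul_mul_sub_one_le (x v : ℝ) : ‖cexp (I * x * v) - 1‖ ≤ |x| * |v| := by
  simpa [mul_assoc, abs_mul] using Real.norm_exp_I_mul_ofReal_sub_one_le (x := x * v)

lemma norm_cexp_I_mul_mul_sub_one_le_two (x v : ℝ) : ‖cexp (I * x * v) - 1‖ ≤ 2 := by
  calc ‖cexp (I * x * v) - 1‖ ≤ ‖cexp (I * ((x * v : ℝ) : ℂ))‖ + ‖(1 : ℂ)‖ := by
        rw [show I * x * v = I * ((x * v : ℝ) : ℂ) by push_cast; ring]; exact norm_sub_le _ _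
    _ = 2 := by rw [norm_exp_I_mul_ofReal, norm_one]; norm_num

noncomputable def rpowMeasure (a : ℝ) : Measure ℝ :=
  (volume.restrict (Ioi 0)).withDensity fun t => ((t ^ (a - 1)).toNNReal : ENNReal)

section RpowMeasure

variable {a : ℝ}

lemma integral_rpowMeasure (g : ℝ → ℂ) :
    ∫ t, g t ∂rpowMeasure a = ∫ t in Ioi 0, ((t ^ (a - 1) : ℝ) : ℂ) * g t := by
  rw [rpowMeasure, integral_withDensity_eq_integral_smul (by fun_prop)]
  refine setIntegral_congr_fun measurableSet_Ioi fun t ht => ?_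
  rw [NNReal.smul_def, Real.coe_toNNReal _ (Real.rpow_nonneg (le_of_lt ht) _), real_smul]

lemma Iio_subset_integrableExpSet_rpowMeasure (ha : 0 < a) :
    Iio 0 ⊆ integrableExpSet id (rpowMeasure a) := by
  intro r hr
  rw [integrableExpSet, mem_ofPred_eq, rpowMeasure,
    integrable_withDensity_iff_integrable_smul (by fun_prop)]
  refine (integrableOn_rpow_mul_exp_neg_mul_s7 (s := a - 1) (by linarith) (neg_pos.2 hr)).congr_fun
    (fun t ht => ?_) measurableSet_Ioi
  simp [NNReal.smul_def, Real.coe_toNNReal _ (Real.rpow_nonneg (le_of_lt ht) _)]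

lemma complexMGF_rpowMeasure_ofReal (ha : 0 < a) {r : ℝ} (hr : r < 0) :
    complexMGF id (rpowMeasure a) r = Real.Gamma a * (-(r : ℂ)) ^ (-(a : ℂ)) := by
  have hr' : 0 < -r := neg_pos.2 hr
  have harg : ((-r : ℝ) : ℂ).arg ≠ Real.pi := by
    rw [arg_ofReal_of_nonneg hr'.le]; exact Real.pi_ne_zero.symm
  have h := integral_cpow_mul_exp_neg_mul_Ioi (a := a) (r := -r) (by simpa using ha) hr'
  rw [Gamma_ofReal, one_div, inv_cpow _ _ harg, ← cpow_neg] at h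
  push_cast at h
  rw [complexMGF, integral_rpowMeasure, mul_comm, ← h]
  refine setIntegral_congr_fun measurableSet_Ioi fun t ht => ?_
  simp [ofReal_cpow (le_of_lt ht)]

lemma complexMGF_rpowMeasure (ha : 0 < a) {z : ℂ} (hz : z.re < 0) :
    complexMGF id (rpowMeasure a) z = Real.Gamma a * (-z) ^ (-(a : ℂ)) := by
  have hU : {w : ℂ | w.re < 0} ⊆ {w | w.re ∈ interior (integrableExpSet id (rpowMeasure a))} :=
    fun w hw => interior_mono (Iio_subset_integrableExpSet_rpowMeasure ha)
      (by simpa [interior_Iio] using hw)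
  have hGamma : AnalyticOnNhd ℂ (fun w : ℂ => Real.Gamma a * (-w) ^ (-(a : ℂ))) {w | w.re < 0} := by
    refine DifferentiableOn.analyticOnNhd (fun w hw => ?_)
      (isOpen_lt continuous_re continuous_const)
    have : -w ∈ slitPlane := Or.inl (by simpa using hw)
    fun_prop (disch := assumption)
  refine (analyticOnNhd_complexMGF.mono hU).eqOn_of_preconnected_of_frequently_eq hGamma
    (convex_halfSpace_re_lt 0).isPreconnected (z₀ := ((-1 : ℝ) : ℂ)) (by norm_num)
    (frequently_nhdsNE_ofReal ?_) hz
  filter_upwards [Iio_mem_nhds (show (-1 : ℝ) < 0 by norm_num)] with r hr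
  exact complexMGF_rpowMeasure_ofReal ha hr

end RpowMeasure

lemma integral_rpow_mul_cexp_neg_mul {a : ℝ} (ha : 0 < a) {s : ℂ} (hs : 0 < s.re) :
    ∫ t in Ioi 0, ((t ^ (a - 1) : ℝ) : ℂ) * cexp (-(s * t)) = Real.Gamma a * s ^ (-(a : ℂ)) := by
  have h := complexMGF_rpowMeasure ha (z := -s) (by simpa using hs)
  rw [complexMGF, integral_rpowMeasure, neg_neg] at h
  simpa using h

namespace TemperedStable

variable (α β lam : ℝ)

noncomputable def levyTail (v : ℝ) : ℝ := α * v ^ (-β) * Real.exp (-lam * v)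

noncomputable def levyDensity (v : ℝ) : ℝ :=
  α * (β + lam * v) * v ^ (-1 - β) * Real.exp (-lam * v)

variable {α β lam}

lemma hasDerivAt_levyTail {v : ℝ} (hv : 0 < v) :
    HasDerivAt (levyTail α β lam) (-levyDensity α β lam v) v := by
  have h := (((Real.hasDerivAt_rpow_const (p := -β) (Or.inl hv.ne')).const_mul α).mul
    ((hasDerivAt_id v).const_mul (-lam)).exp)
  refine h.congr_deriv ?_
  rw [levyDensity, show -β - 1 = -1 - β by ring, rpow_neg_eq_mul_rpow_neg_one_sub hv]
  simp only [id]
  ring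

lemma mul_levyDensity {v : ℝ} (hv : 0 < v) :
    v * levyDensity α β lam v = α * β * (v ^ (-β) * Real.exp (-lam * v))
      + α * lam * (v ^ (1 - β) * Real.exp (-lam * v)) := by
  rw [levyDensity, rpow_neg_eq_mul_rpow_neg_one_sub hv, show 1 - β = 1 + -β by ring,
    Real.rpow_add hv, rpow_neg_eq_mul_rpow_neg_one_sub hv, Real.rpow_one]
  ring

lemma integrableOn_mul_levyDensity (hβ : β < 1) (hlam : 0 < lam) :
    IntegrableOn (fun v => v * levyDensity α β lam v) (Ioi 0) := by
  have h := ((integrableOn_rpow_mul_exp_neg_mul_s7 (s := -β) (by linarith) hlam).const_mul (α * β)).add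
    ((integrableOn_rpow_mul_exp_neg_mul_s7 (s := 1 - β) (by linarith) hlam).const_mul (α * lam))
  exact IntegrableOn.congr_fun h (fun v hv => (mul_levyDensity hv).symm) measurableSet_Ioi

lemma integrableOn_levyTail (hβ : β < 1) (hlam : 0 < lam) :
    IntegrableOn (levyTail α β lam) (Ioi 0) := by
  have h := (integrableOn_rpow_mul_exp_neg_mul_s7 (s := -β) (by linarith) hlam).const_mul α
  exact IntegrableOn.congr_fun h (fun v _ => by simp only [levyTail]; ring) measurableSet_Ioi

lemma integrableOn_cexp_sub_one_mul_levyDensity (hβ : β < 1) (hlam : 0 < lam) (x : ℝ) :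
    IntegrableOn (fun v : ℝ => (cexp (I * x * v) - 1) * (levyDensity α β lam v : ℂ)) (Ioi 0) := by
  refine ((integrableOn_mul_levyDensity (α := α) hβ hlam).const_mul |x|).mono ?_ ?_
  · refine ContinuousOn.aestronglyMeasurable ?_ measurableSet_Ioi
    intro v (hv : 0 < v)
    have h : ContinuousAt (levyDensity α β lam) v :=
      ((continuousAt_const.mul (by fun_prop)).mul
        (Real.continuousAt_rpow_const _ _ (Or.inl hv.ne'))).mul (by fun_prop)
    exact ContinuousAt.continuousWithinAt (by fun_prop)
  · filter_upwards [ae_restrict_mem measurableSet_Ioi] with v hv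
    rw [norm_mul, norm_real, norm_mul, norm_mul, Real.norm_eq_abs, Real.norm_eq_abs,
      Real.norm_eq_abs, abs_abs, ← mul_assoc]
    gcongr
    exact norm_cexp_I_mul_mul_sub_one_le x v

lemma tendsto_cexp_sub_one_mul_levyTail_nhdsGT_zero (hβ : β < 1) (x : ℝ) :
    Tendsto (fun v : ℝ => (cexp (I * x * v) - 1) * (levyTail α β lam v : ℂ)) (𝓝[>] 0) (𝓝 0) := by
  have h := (tendsto_rpow_mul_exp_neg_mul_nhdsGT_zero (s := 1 - β) (by linarith) lam).const_mul
    (|α| * |x|)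
  rw [mul_zero] at h
  refine squeeze_zero_norm' ?_ h
  filter_upwards [self_mem_nhdsWithin] with v (hv : 0 < v)
  rw [norm_mul, norm_real, Real.norm_eq_abs, levyTail, abs_mul, abs_mul,
    Real.abs_rpow_of_nonneg hv.le, abs_of_pos hv, Real.abs_exp,
    show 1 - β = 1 + -β by ring, Real.rpow_add hv, Real.rpow_one]
  have := norm_cexp_I_mul_mul_sub_one_le x v
  rw [abs_of_pos hv] at this
  calc _ ≤ |x| * v * (|α| * v ^ (-β) * Real.exp (-lam * v)) := by gcongr
    _ = _ := by ring

lemma tendsto_cexp_sub_one_mul_levyTail_atTop (hlam : 0 < lam) (x : ℝ) :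
    Tendsto (fun v : ℝ => (cexp (I * x * v) - 1) * (levyTail α β lam v : ℂ)) atTop (𝓝 0) := by
  have h := (tendsto_rpow_mul_exp_neg_mul_atTop_nhds_zero (-β) lam hlam).const_mul (2 * |α|)
  rw [mul_zero] at h
  refine squeeze_zero_norm' ?_ h
  filter_upwards [eventually_gt_atTop 0] with v hv
  rw [norm_mul, norm_real, Real.norm_eq_abs, levyTail, abs_mul, abs_mul,
    Real.abs_rpow_of_nonneg hv.le, abs_of_pos hv, Real.abs_exp]
  calc _ ≤ 2 * (|α| * v ^ (-β) * Real.exp (-lam * v)) := by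
        gcongr; exact norm_cexp_I_mul_mul_sub_one_le_two x v
    _ = _ := by ring

lemma cexp_mul_levyTail_eq (x v : ℝ) :
    I * x * cexp (I * x * v) * (levyTail α β lam v : ℂ)
      = I * x * α * (((v ^ (1 - β - 1) : ℝ) : ℂ) * cexp (-((lam - I * x) * v))) := by
  have h : cexp (-((lam - I * x) * v)) = cexp (I * x * v) * cexp (-lam * v) := by
    rw [← exp_add]; ring_nf
  rw [h, show 1 - β - 1 = -β by ring, levyTail]
  push_cast
  ring

lemma integrableOn_cexp_mul_levyTail (hβ : β < 1) (hlam : 0 < lam) (x : ℝ) :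
    IntegrableOn (fun v : ℝ => I * x * cexp (I * x * v) * (levyTail α β lam v : ℂ)) (Ioi 0) := by
  refine (integrableOn_levyTail hβ hlam).ofReal.bdd_mul (c := |x|) (by fun_prop) ?_
  refine ae_of_all _ fun v => ?_
  rw [norm_mul, norm_mul, norm_I, norm_real, one_mul, Real.norm_eq_abs,
    show I * x * v = I * ((x * v : ℝ) : ℂ) by push_cast; ring, norm_exp_I_mul_ofReal, mul_one]

lemma integral_cexp_mul_levyTail (hβ : β < 1) (hlam : 0 < lam) (x : ℝ) :
    ∫ v : ℝ in Ioi 0, I * x * cexp (I * x * v) * (levyTail α β lam v : ℂ)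
      = α * Real.Gamma (1 - β) * (I * x) / (lam - I * x) ^ ((1 - β : ℝ) : ℂ) := by
  have hs : 0 < ((lam : ℂ) - I * x).re := by simpa using hlam
  simp_rw [cexp_mul_levyTail_eq]
  rw [integral_const_mul, integral_rpow_mul_cexp_neg_mul (by linarith) hs, cpow_neg,
    div_eq_mul_inv]
  ring

lemma integral_cexp_sub_one_mul_levyDensity (hβ : β < 1) (hlam : 0 < lam) (x : ℝ) :
    ∫ v : ℝ in Ioi 0, (cexp (I * x * v) - 1) * (levyDensity α β lam v : ℂ)
      = ∫ v : ℝ in Ioi 0, I * x * cexp (I * x * v) * (levyTail α β lam v : ℂ) := by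
  have hu : ∀ v ∈ Ioi (0 : ℝ),
      HasDerivAt (fun v : ℝ => cexp (I * x * v) - 1) (I * x * cexp (I * x * v)) v := fun v _ => by
    simpa [mul_comm] using
      (((hasDerivAt_id (v : ℂ)).const_mul (I * x)).cexp.sub_const 1).comp_ofReal
  have hw : ∀ v ∈ Ioi (0 : ℝ),
      HasDerivAt (fun v : ℝ => (levyTail α β lam v : ℂ)) (-(levyDensity α β lam v : ℂ)) v :=
    fun v hv => (hasDerivAt_levyTail hv).ofReal_comp.congr_deriv (ofReal_neg _)
  have hint : IntegrableOn (fun v : ℝ => (cexp (I * x * v) - 1) * -(levyDensity α β lam v : ℂ))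
      (Ioi 0) := by
    simpa only [mul_neg, Pi.neg_def] using (integrableOn_cexp_sub_one_mul_levyDensity hβ hlam x).neg
  have hIBP := integral_Ioi_mul_deriv_eq_deriv_mul hu hw hint
    (integrableOn_cexp_mul_levyTail hβ hlam x)
    (tendsto_cexp_sub_one_mul_levyTail_nhdsGT_zero hβ x)
    (tendsto_cexp_sub_one_mul_levyTail_atTop hlam x)
  simpa [integral_neg] using hIBP

end TemperedStable

theorem BDLP_char_exponent_general (β α lam : ℝ) (hβ1 : β < 1) (hlam : 0 < lam) (x : ℝ) :
    IntegrableOn (fun v : ℝ =>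
        (Complex.exp (Complex.I * x * v) - 1) *
          ((α * (β + lam * v) * v ^ (-1 - β) * Real.exp (-lam * v) : ℝ) : ℂ)) (Ioi 0) ∧
    ∫ v in Ioi (0 : ℝ),
        (Complex.exp (Complex.I * x * v) - 1) *
          ((α * (β + lam * v) * v ^ (-1 - β) * Real.exp (-lam * v) : ℝ) : ℂ)
      = (α : ℂ) * (Real.Gamma (1 - β) : ℂ) * (Complex.I * x) /
          ((lam : ℂ) - Complex.I * x) ^ ((1 - β : ℝ) : ℂ) :=
  ⟨TemperedStable.integrableOn_cexp_sub_one_mul_levyDensity hβ1 hlam x,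
    (TemperedStable.integral_cexp_sub_one_mul_levyDensity hβ1 hlam x).trans
      (TemperedStable.integral_cexp_mul_levyTail hβ1 hlam x)⟩

/-- Characteristic exponent of the background driving Lévy process of the one-sided tempered
stable distribution: `∫₀^∞ (e^{ivx}−1) α (β+λv) v^{−1−β} e^{−λv} dv
  = α Γ(1−β) (ix)/(λ−ix)^{1−β}`. -/
theorem BDLP_char_exponent (β α lam : ℝ) (hβ0 : 0 < β) (hβ1 : β < 1)
    (hα : 0 < α) (hlam : 0 < lam) (x : ℝ) :
    IntegrableOn (fun v : ℝ =>
        (Complex.exp (Complex.I * x * v) - 1) *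
          ((α * (β + lam * v) * v ^ (-1 - β) * Real.exp (-lam * v) : ℝ) : ℂ)) (Ioi 0) ∧
    ∫ v in Ioi (0 : ℝ),
        (Complex.exp (Complex.I * x * v) - 1) *
          ((α * (β + lam * v) * v ^ (-1 - β) * Real.exp (-lam * v) : ℝ) : ℂ)
      = (α : ℂ) * (Real.Gamma (1 - β) : ℂ) * (Complex.I * x) /
          ((lam : ℂ) - Complex.I * x) ^ ((1 - β : ℝ) : ℂ) :=
  BDLP_char_exponent_general β α lam hβ1 hlam x
end

section
/- Let 0 < β < 1, α > 0, λ > 0, and y > 0. Then ∫₀^∞ ( ∫_{e^t·y}^∞ α·e^{−λs}·s^{−1−β} ds ) dt = ∫_y^∞ α·λ^β·Γ(−β, λx)·x^{−1} dx, both sides being finite; that is, the measure U(dx) = α·λ^β·Γ(−β, λx)·x^{−1} dx on (0,∞) satisfies U((y,∞)) = ∫₀^∞ W((e^t·y, ∞)) dt where W is the one-sided tempered stable Lévy measure. -/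
/-!
The scaling `s = t / λ` writes the tail `W((u,∞))` as `α λ^β Γ(−β, λu)`, and the substitution
`x = e^t y`, under which `dt = dx / x` and `(0,∞)` maps onto `(y,∞)`, turns
`∫₀^∞ W((e^t y,∞)) dt` into `∫_y^∞ α λ^β Γ(−β, λx) x⁻¹ dx`. Both sides are finite because
`Γ(s, c) ≤ c^{s−1} e^{−c}` for `s ≤ 1`, so the integrand decays exponentially.
-/

open MeasureTheory Set

/-- Upper incomplete gamma function `Γ(s,x) = ∫_x^∞ t^{s−1} e^{−t} dt`. -/
noncomputable def upperGamma (s x : ℝ) : ℝ := ∫ t in Ioi x, t ^ (s - 1) * Real.exp (-t)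

open Real

lemma integrableOn_rpow_mul_exp_neg_Ioi {r c : ℝ} (hr : r ≤ 0) (hc : 0 < c) :
    IntegrableOn (fun t : ℝ => t ^ r * exp (-t)) (Ioi c) := by
  have hcont : ContinuousOn (fun t : ℝ => t ^ r * exp (-t)) (Ioi c) :=
    ContinuousOn.mul (fun t ht => (continuousAt_rpow_const t r
      (Or.inl (hc.trans ht).ne')).continuousWithinAt) (by fun_prop)
  refine Integrable.mono' ((integrableOn_exp_neg_Ioi c).const_mul (c ^ r))
    (hcont.aestronglyMeasurable measurableSet_Ioi) ?_
  refine (ae_restrict_iff' measurableSet_Ioi).mpr (ae_of_all _ fun t ht => ?_)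
  have ht0 : 0 < t := hc.trans ht
  rw [norm_mul, norm_of_nonneg (rpow_nonneg ht0.le r), norm_of_nonneg (exp_pos _).le]
  exact mul_le_mul_of_nonneg_right (rpow_le_rpow_of_nonpos hc (le_of_lt ht) hr) (exp_pos _).le

lemma upperGamma_nonneg (s : ℝ) {c : ℝ} (hc : 0 ≤ c) : 0 ≤ upperGamma s c :=
  setIntegral_nonneg measurableSet_Ioi fun _ ht =>
    mul_nonneg (rpow_nonneg (hc.trans (le_of_lt ht)) _) (exp_pos _).le

lemma upperGamma_le_rpow_mul_exp {s c : ℝ} (hs : s ≤ 1) (hc : 0 < c) :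
    upperGamma s c ≤ c ^ (s - 1) * exp (-c) := by
  calc upperGamma s c ≤ ∫ t in Ioi c, c ^ (s - 1) * exp (-t) := by
        refine setIntegral_mono_on (integrableOn_rpow_mul_exp_neg_Ioi (by linarith) hc)
          ((integrableOn_exp_neg_Ioi c).const_mul _) measurableSet_Ioi fun t ht =>
          mul_le_mul_of_nonneg_right (rpow_le_rpow_of_nonpos hc (le_of_lt ht) (by linarith))
            (exp_pos _).le
    _ = c ^ (s - 1) * exp (-c) := by rw [integral_const_mul, integral_exp_neg_Ioi]

lemma upperGamma_antitoneOn {s : ℝ} (hs : s ≤ 1) : AntitoneOn (upperGamma s) (Ioi 0) :=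
  fun x hx _ _ hxx' => setIntegral_mono_set
    (integrableOn_rpow_mul_exp_neg_Ioi (by linarith) hx)
    ((ae_restrict_iff' measurableSet_Ioi).mpr (ae_of_all _ fun t ht =>
      mul_nonneg (rpow_nonneg (hx.out.trans ht).le _) (exp_pos _).le))
    (Ioi_subset_Ioi hxx').eventuallyLE

lemma integral_exp_neg_mul_mul_rpow_Ioi (β : ℝ) {lam u : ℝ} (hlam : 0 < lam) (hu : 0 ≤ u) :
    ∫ s in Ioi u, exp (-lam * s) * s ^ (-1 - β) = lam ^ β * upperGamma (-β) (lam * u) := by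
  have hscale : ∀ s ∈ Ioi u, exp (-lam * s) * s ^ (-1 - β)
      = lam ^ (β + 1) * ((lam * s) ^ (-β - 1) * exp (-(lam * s))) := by
    intro s hs
    rw [mul_rpow hlam.le (hu.trans (le_of_lt hs)), show -β - 1 = -(β + 1) by ring,
      rpow_neg hlam.le, show -(β + 1) = -1 - β by ring]
    field_simp
  rw [setIntegral_congr_fun measurableSet_Ioi hscale, integral_const_mul,
    integral_comp_mul_left_Ioi (fun t => t ^ (-β - 1) * exp (-t)) u hlam, smul_eq_mul,
    ← mul_assoc, rpow_add_one hlam.ne', mul_inv_cancel_right₀ hlam.ne']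
  rfl

lemma integrableOn_upperGamma_mul_inv {s lam y : ℝ} (hs : s ≤ 1) (hlam : 0 < lam) (hy : 0 < y) :
    IntegrableOn (fun x => upperGamma s (lam * x) * x⁻¹) (Ioi y) := by
  have hmeas : AEStronglyMeasurable (fun x => upperGamma s (lam * x) * x⁻¹)
      (volume.restrict (Ioi y)) := by
    have hanti : AntitoneOn (fun x => upperGamma s (lam * x)) (Ioi y) :=
      fun a ha b hb hab => upperGamma_antitoneOn hs (mul_pos hlam (hy.trans ha))
        (mul_pos hlam (hy.trans hb)) (mul_le_mul_of_nonneg_left hab hlam.le)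
    exact ((aemeasurable_restrict_of_antitoneOn measurableSet_Ioi hanti).mul
      measurable_inv.aemeasurable).aestronglyMeasurable
  refine Integrable.mono' ((exp_neg_integrableOn_Ioi y hlam).const_mul
    ((lam * y) ^ (s - 1) * y⁻¹)) hmeas ?_
  refine (ae_restrict_iff' measurableSet_Ioi).mpr (ae_of_all _ fun x hx => ?_)
  have hx0 : 0 < x := hy.trans hx
  have hlamx : 0 < lam * x := mul_pos hlam hx0
  have hΓ : upperGamma s (lam * x) ≤ (lam * y) ^ (s - 1) * exp (-lam * x) := by
    calc upperGamma s (lam * x) ≤ (lam * x) ^ (s - 1) * exp (-(lam * x)) :=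
          upperGamma_le_rpow_mul_exp hs hlamx
      _ ≤ (lam * y) ^ (s - 1) * exp (-lam * x) := by
          rw [neg_mul]
          exact mul_le_mul_of_nonneg_right (rpow_le_rpow_of_nonpos (mul_pos hlam hy)
            (mul_le_mul_of_nonneg_left (le_of_lt hx) hlam.le) (by linarith)) (exp_pos _).le
  rw [norm_mul, norm_of_nonneg (upperGamma_nonneg s hlamx.le), norm_inv,
    norm_of_nonneg hx0.le]
  calc upperGamma s (lam * x) * x⁻¹ ≤ (lam * y) ^ (s - 1) * exp (-lam * x) * y⁻¹ :=
        mul_le_mul hΓ (inv_anti₀ hy (le_of_lt hx)) (inv_nonneg.mpr hx0.le)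
          (by positivity)
    _ = (lam * y) ^ (s - 1) * y⁻¹ * exp (-lam * x) := by ring

lemma image_exp_mul_Ioi_zero {y : ℝ} (hy : 0 < y) : (fun t => exp t * y) '' Ioi 0 = Ioi y := by
  rw [show (fun t => exp t * y) = (· * y) ∘ exp from rfl, image_comp, image_exp_Ioi, exp_zero]
  simpa using (OrderIso.mulRight₀ y hy).image_Ioi 1

section ChangeOfVariables

variable {E : Type*} [NormedAddCommGroup E] [NormedSpace ℝ E] {y : ℝ}

lemma smul_inv_smul_exp_mul (f : ℝ → E) (hy : 0 < y) (t : ℝ) :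
    |exp t * y| • (exp t * y)⁻¹ • f (exp t * y) = f (exp t * y) := by
  have : 0 < exp t * y := by positivity
  rw [abs_of_pos this, smul_inv_smul₀ this.ne']

lemma integrableOn_comp_exp_mul_Ioi_iff (f : ℝ → E) (hy : 0 < y) :
    IntegrableOn (fun t => f (exp t * y)) (Ioi 0) ↔ IntegrableOn (fun x => x⁻¹ • f x) (Ioi y) := by
  rw [← image_exp_mul_Ioi_zero hy, integrableOn_image_iff_integrableOn_abs_deriv_smul
    measurableSet_Ioi (fun t _ => ((hasDerivAt_exp t).mul_const y).hasDerivWithinAt)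
    (fun a _ b _ h => exp_injective (mul_right_cancel₀ hy.ne' h))]
  simp only [smul_inv_smul_exp_mul f hy]

lemma integral_comp_exp_mul_Ioi (f : ℝ → E) (hy : 0 < y) :
    ∫ t in Ioi 0, f (exp t * y) = ∫ x in Ioi y, x⁻¹ • f x := by
  rw [← image_exp_mul_Ioi_zero hy, integral_image_eq_integral_abs_deriv_smul
    measurableSet_Ioi (fun t _ => ((hasDerivAt_exp t).mul_const y).hasDerivWithinAt)
    (fun a _ b _ h => exp_injective (mul_right_cancel₀ hy.ne' h))]
  simp only [smul_inv_smul_exp_mul f hy]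

end ChangeOfVariables

theorem selfdecomposable_levy_tail_general (β α lam y : ℝ) (hβ0 : 0 < β)
    (hlam : 0 < lam) (hy : 0 < y) :
    IntegrableOn (fun t : ℝ =>
        ∫ s in Ioi (Real.exp t * y), α * Real.exp (-lam * s) * s ^ (-1 - β)) (Ioi 0) ∧
    IntegrableOn (fun x : ℝ => α * lam ^ β * upperGamma (-β) (lam * x) * x⁻¹) (Ioi y) ∧
    ∫ t in Ioi (0 : ℝ), (∫ s in Ioi (Real.exp t * y), α * Real.exp (-lam * s) * s ^ (-1 - β))
      = ∫ x in Ioi y, α * lam ^ β * upperGamma (-β) (lam * x) * x⁻¹ := by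
  set F : ℝ → ℝ := fun x => α * lam ^ β * upperGamma (-β) (lam * x)
  have htail : (fun t => ∫ s in Ioi (exp t * y), α * exp (-lam * s) * s ^ (-1 - β))
      = fun t => F (exp t * y) := by
    ext t
    simp only [F, mul_assoc α, integral_const_mul,
      integral_exp_neg_mul_mul_rpow_Ioi β hlam (by positivity : 0 ≤ exp t * y)]
  have hdensity : (fun x => F x * x⁻¹) = fun x => x⁻¹ • F x := by
    ext x
    rw [smul_eq_mul, mul_comm]
  have hU : IntegrableOn (fun x => F x * x⁻¹) (Ioi y) := by
    simp only [F, mul_assoc (α * lam ^ β)]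
    exact (integrableOn_upperGamma_mul_inv (by linarith) hlam hy).const_mul _
  rw [htail, integrableOn_comp_exp_mul_Ioi_iff F hy, integral_comp_exp_mul_Ioi F hy, ← hdensity]
  exact ⟨hU, hU, rfl⟩

/-- The Lévy measure `U(dx) = α λ^β Γ(−β,λx) x⁻¹ dx` of the self-decomposable law whose
background driving Lévy process is the one-sided tempered stable process satisfies
`U((y,∞)) = ∫₀^∞ W((e^t y, ∞)) dt`, both sides being finite. -/
theorem selfdecomposable_levy_tail (β α lam y : ℝ) (hβ0 : 0 < β) (hβ1 : β < 1)
    (hα : 0 < α) (hlam : 0 < lam) (hy : 0 < y) :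
    IntegrableOn (fun t : ℝ =>
        ∫ s in Ioi (Real.exp t * y), α * Real.exp (-lam * s) * s ^ (-1 - β)) (Ioi 0) ∧
    IntegrableOn (fun x : ℝ => α * lam ^ β * upperGamma (-β) (lam * x) * x⁻¹) (Ioi y) ∧
    ∫ t in Ioi (0 : ℝ), (∫ s in Ioi (Real.exp t * y), α * Real.exp (-lam * s) * s ^ (-1 - β))
      = ∫ x in Ioi y, α * lam ^ β * upperGamma (-β) (lam * x) * x⁻¹ :=
  selfdecomposable_levy_tail_general β α lam y hβ0 hlam hy
end

section
/- Let 0 < β₊ < 1, 0 < β₋ < 1, α₊, α₋ > 0, λ₊, λ₋ > 0, μ ∈ ℝ, and define Ψ : ℝ → ℂ by Ψ(u) = μui + α₊·Γ(−β₊)·((λ₊ − iu)^{β₊} − λ₊^{β₊}) + α₋·Γ(−β₋)·((λ₋ + iu)^{β₋} − λ₋^{β₋}). Fix λ > 0, X₀ ∈ ℝ and ξ ∈ ℝ. Then u ↦ Ψ(u)/u is integrable on the interval between 0 and ξ, and lim_{t→∞} ( e^{−λt}·X₀·ξ·i + ∫_{ξ·e^{−λt}}^{ξ} Ψ(u)/u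 du ) = ∫₀^{ξ} Ψ(u)/u du. -/
/-!
`Ψ` is differentiable with `Ψ 0 = 0`, so off `0` the integrand `Ψ u / u` is the difference
quotient `dslope Ψ 0`, which is continuous. Hence the integrand is locally integrable, the
integral over `[ξ e^{-λt}, ξ]` is continuous in its lower limit, which tends to `0`, and the
drift term `e^{-λt} X₀ ξ i` vanishes in the limit.
-/

open MeasureTheory Set Filter Topology intervalIntegral

theorem differentiable_cpow_ofReal_add_mul_ofReal {l : ℝ} (hl : 0 < l) {c : ℂ} (hc : c.re = 0)
    (b : ℂ) : Differentiable ℝ (fun u : ℝ => ((l : ℂ) + c * u) ^ b) := by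
  intro u
  have hslit : (l : ℂ) + c * u ∈ Complex.slitPlane :=
    Complex.mem_slitPlane_iff.2 (Or.inl (by simp [hc, hl]))
  have hdiff : DifferentiableAt ℂ (fun z : ℂ => ((l : ℂ) + c * z) ^ b) u := by
    fun_prop (disch := exact hslit)
  exact hdiff.hasDerivAt.comp_ofReal.differentiableAt

theorem tendsto_integral_of_tendsto_lowerLimit {E : Type*} [NormedAddCommGroup E]
    [NormedSpace ℝ E] {g : ℝ → E} (hg : ∀ a b, IntervalIntegrable g volume a b)
    {ι : Type*} {l : Filter ι} {a : ι → ℝ} {a₀ : ℝ} (ha : Tendsto a l (𝓝 a₀)) (b : ℝ) :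
    Tendsto (fun i => ∫ u in a i..b, g u) l (𝓝 (∫ u in a₀..b, g u)) := by
  simpa only [Function.comp_def, ← integral_symm] using
    (((continuous_primitive hg b).tendsto a₀).comp ha).neg

section DivOfReal

variable {Ψ : ℝ → ℂ}

theorem div_ofReal_eqOn_dslope (h0 : Ψ 0 = 0) :
    EqOn (fun u : ℝ => Ψ u / u) (dslope Ψ 0) {0}ᶜ := fun u hu => by
  simp [dslope_of_ne _ hu, slope, h0, div_eq_inv_mul, Complex.real_smul]

theorem intervalIntegrable_div_ofReal (hΨ : Differentiable ℝ Ψ) (h0 : Ψ 0 = 0) (a b : ℝ) :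
    IntervalIntegrable (fun u : ℝ => Ψ u / u) volume a b := by
  have hcont : Continuous (dslope Ψ 0) := continuousOn_univ.1 <|
    (continuousOn_dslope univ_mem).2 ⟨hΨ.continuous.continuousOn, hΨ 0⟩
  refine (hcont.intervalIntegrable a b).congr_ae (ae_restrict_of_ae ?_)
  filter_upwards [Measure.ae_ne volume 0] with u hu using (div_ofReal_eqOn_dslope h0 hu).symm

end DivOfReal

theorem OU_GTS_stationary_limit_general (βp βm αp αm lamp lamm μ : ℝ)
    (hlamp : 0 < lamp) (hlamm : 0 < lamm)
    (Ψ : ℝ → ℂ)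
    (hΨ : ∀ u : ℝ, Ψ u
      = (μ * u : ℂ) * Complex.I
        + (αp : ℂ) * (Real.Gamma (-βp) : ℂ) *
            (((lamp : ℂ) - Complex.I * u) ^ (βp : ℂ) - (lamp : ℂ) ^ (βp : ℂ))
        + (αm : ℂ) * (Real.Gamma (-βm) : ℂ) *
            (((lamm : ℂ) + Complex.I * u) ^ (βm : ℂ) - (lamm : ℂ) ^ (βm : ℂ)))
    (lam X₀ ξ : ℝ) (hlam : 0 < lam) :
    IntervalIntegrable (fun u : ℝ => Ψ u / (u : ℂ)) volume 0 ξ ∧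
    Tendsto (fun t : ℝ =>
        (Real.exp (-lam * t) * X₀ * ξ : ℂ) * Complex.I
          + ∫ u in (ξ * Real.exp (-lam * t))..ξ, Ψ u / (u : ℂ))
      atTop (𝓝 (∫ u in (0 : ℝ)..ξ, Ψ u / (u : ℂ))) := by
  have hdiff : Differentiable ℝ Ψ := by
    have hp := differentiable_cpow_ofReal_add_mul_ofReal hlamp (c := -Complex.I) (by simp) βp
    have hm := differentiable_cpow_ofReal_add_mul_ofReal hlamm (c := Complex.I) (by simp) βm
    simp only [neg_mul, ← sub_eq_add_neg] at hp
    rw [funext hΨ]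
    fun_prop
  have hzero : Ψ 0 = 0 := by simp [hΨ]
  have hint := intervalIntegrable_div_ofReal hdiff hzero
  have hexp : Tendsto (fun t => Real.exp (-lam * t)) atTop (𝓝 0) :=
    Real.tendsto_exp_atBot.comp <| tendsto_id.const_mul_atTop_of_neg (neg_neg_iff_pos.2 hlam)
  have hdrift : Tendsto (fun t : ℝ => (Real.exp (-lam * t) * X₀ * ξ : ℂ) * Complex.I)
      atTop (𝓝 0) := by
    simpa [mul_assoc] using
      ((Complex.continuous_ofReal.tendsto 0).comp hexp).mul_const (X₀ * ξ * Complex.I : ℂ)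
  have hlower : Tendsto (fun t => ξ * Real.exp (-lam * t)) atTop (𝓝 0) := by
    simpa using hexp.const_mul ξ
  refine ⟨hint 0 ξ, ?_⟩
  simpa using hdrift.add (tendsto_integral_of_tendsto_lowerLimit hint hlower ξ)

/-- Convergence of the log characteristic function of the Ornstein–Uhlenbeck type process
driven by a GTS Lévy process to the stationary log characteristic function
`φ(ξ) = ∫₀^ξ Ψ(u)/u du`, where `Ψ` is the GTS characteristic exponent. -/
theorem OU_GTS_stationary_limit (βp βm αp αm lamp lamm μ : ℝ)
    (hβp0 : 0 < βp) (hβp1 : βp < 1) (hβm0 : 0 < βm) (hβm1 : βm < 1)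
    (hαp : 0 < αp) (hαm : 0 < αm) (hlamp : 0 < lamp) (hlamm : 0 < lamm)
    (Ψ : ℝ → ℂ)
    (hΨ : ∀ u : ℝ, Ψ u
      = (μ * u : ℂ) * Complex.I
        + (αp : ℂ) * (Real.Gamma (-βp) : ℂ) *
            (((lamp : ℂ) - Complex.I * u) ^ (βp : ℂ) - (lamp : ℂ) ^ (βp : ℂ))
        + (αm : ℂ) * (Real.Gamma (-βm) : ℂ) *
            (((lamm : ℂ) + Complex.I * u) ^ (βm : ℂ) - (lamm : ℂ) ^ (βm : ℂ)))
    (lam X₀ ξ : ℝ) (hlam : 0 < lam) :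
    IntervalIntegrable (fun u : ℝ => Ψ u / (u : ℂ)) volume 0 ξ ∧
    Tendsto (fun t : ℝ =>
        (Real.exp (-lam * t) * X₀ * ξ : ℂ) * Complex.I
          + ∫ u in (ξ * Real.exp (-lam * t))..ξ, Ψ u / (u : ℂ))
      atTop (𝓝 (∫ u in (0 : ℝ)..ξ, Ψ u / (u : ℂ))) :=
  OU_GTS_stationary_limit_general βp βm αp αm lamp lamm μ hlamp hlamm Ψ hΨ lam X₀ ξ hlam
end

section
/- Let 0 < β₊ < 1, 0 < β₋ < 1, α₊, α₋ > 0, λ₊, λ₋ > 0, μ ∈ ℝ, and define Ψ : ℝ → ℂ by Ψ(ξ) = μξi + α₊·Γ(−β₊)·((λ₊ − iξ)^{β₊} − λ₊^{β₊}) + α₋·Γ(−β₋)·((λ₋ + iξ)^{β₋} − λ₋^{β₋}). Then for every real ξ with |ξ| < min(λ₊, λ₋), Ψ(ξ) = Σ_{j=1}^∞ κ_j·(iξ)^j/j!, where κ₁ = μ + α₊·Γ(1−β₊)/λ₊^{1−β₊} − α₋·Γ(1−β₋)/λ₋^{1−β₋} and, for k ≥ 2, κ_k = α₊·Γ(k−β₊)/λ₊^{k−β₊}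 + (−1)^k·α₋·Γ(k−β₋)/λ₋^{k−β₋}, the series converging absolutely. -/
/-! For `‖z‖ < λ` the binomial series gives `(λ - z)^β = Σₙ C(β, n) λ^β (-z/λ)^n`, and
`Γ(n - β) = (-1)ⁿ n! C(β, n) Γ(-β)` turns the `n`-th coefficient of `Γ(-β) ((λ - z)^β - λ^β)`
into `Γ(n - β) / λ^(n - β) · zⁿ / n!`. Applying this to both tails, at `z = iξ` and `z = -iξ`, and
adding the drift `μiξ` gives the cumulant series; absolute convergence is inherited from the
binomial series inside its unit disc. -/

open Polynomial Complex

theorem Ring.choose_succ_mul_succ {K : Type*} [Field K] [CharZero K] (a : K) (n : ℕ) :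
    Ring.choose a (n + 1) * (n + 1) = Ring.choose a n * (a - n) := by
  have h := Ring.descPochhammer_eq_factorial_smul_choose a (n + 1)
  rw [descPochhammer_succ_right, smeval_mul, smeval_sub, smeval_X, smeval_natCast,
    Ring.descPochhammer_eq_factorial_smul_choose, Nat.factorial_succ] at h
  simp only [nsmul_eq_mul, pow_one, pow_zero] at h
  push_cast at h
  apply mul_left_cancel₀ (Nat.cast_ne_zero.mpr n.factorial_ne_zero : (n.factorial : K) ≠ 0)
  linear_combination -h

theorem Real.Gamma_natCast_sub {β : ℝ} (hβ : ∀ k : ℕ, β ≠ k) (n : ℕ) :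
    Real.Gamma (n - β) = (-1) ^ n * n.factorial * Ring.choose β n * Real.Gamma (-β) := by
  induction n with
  | zero => simp
  | succ n ih =>
    have hne : (n : ℝ) - β ≠ 0 := sub_ne_zero.mpr (hβ n).symm
    rw [Nat.cast_succ, add_sub_right_comm, Real.Gamma_add_one hne, ih, Nat.factorial_succ,
      pow_succ]
    push_cast
    linear_combination (-1) ^ n * n.factorial * Real.Gamma (-β) * Ring.choose_succ_mul_succ β n

theorem Complex.ofReal_mul_cpow {r : ℝ} (hr : 0 < r) {w : ℂ} (hw : w ≠ 0) (a : ℂ) :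
    ((r : ℂ) * w) ^ a = (r : ℂ) ^ a * w ^ a := by
  have hr' : (r : ℂ) ≠ 0 := ofReal_ne_zero.mpr hr.ne'
  rw [cpow_def_of_ne_zero (mul_ne_zero hr' hw), cpow_def_of_ne_zero hr', cpow_def_of_ne_zero hw,
    log_ofReal_mul hr hw, ← ofReal_log hr.le, add_mul, exp_add]

theorem Complex.summable_norm_choose_mul_pow (a : ℂ) {x : ℂ} (hx : ‖x‖ < 1) :
    Summable fun n => ‖Ring.choose a n * x ^ n‖ := by
  have hmem : x ∈ Metric.eball (0 : ℂ) (binomialSeries ℂ a).radius :=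
    Metric.eball_subset_eball binomialSeries_radius_ge_one
      (by rw [← ENNReal.ofReal_one, Metric.eball_ofReal]; simpa using hx)
  simpa [binomialSeries, FormalMultilinearSeries.coeff_ofScalars, mul_comm]
    using (binomialSeries ℂ a).summable_norm_apply hmem

theorem Complex.hasSum_choose_mul_cpow (a : ℂ) {r : ℝ} (hr : 0 < r) {y : ℂ} (hy : ‖y‖ < r) :
    HasSum (fun n => Ring.choose a n * (r : ℂ) ^ a * (y / r) ^ n) (((r : ℂ) + y) ^ a) := by
  have hx : ‖y / r‖ < 1 := by
    rwa [norm_div, norm_real, Real.norm_of_nonneg hr.le, div_lt_one hr]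
  have hmem : y / r ∈ Metric.eball (0 : ℂ) 1 := by
    rw [← ENNReal.ofReal_one, Metric.eball_ofReal]; simpa using hx
  have h := (one_add_cpow_hasFPowerSeriesOnBall_zero (a := a)).hasSum hmem
  simp only [binomialSeries_apply, List.ofFn_const, List.prod_replicate, smul_eq_mul,
    zero_add] at h
  have hsplit : (r : ℂ) + y = r * (1 + y / r) := by
    rw [mul_add, mul_div_cancel₀ _ (ofReal_ne_zero.mpr hr.ne'), mul_one]
  rw [hsplit, ofReal_mul_cpow hr (slitPlane_ne_zero (mem_slitPlane_of_norm_lt_one hx))]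
  exact (h.mul_left ((r : ℂ) ^ a)).congr_fun fun n => by ring

noncomputable def temperedStableCumulant (α β lam : ℝ) (k : ℕ) : ℝ :=
  α * Real.Gamma (k - β) / lam ^ ((k : ℝ) - β)

theorem temperedStableCumulant_mul_pow_div_factorial (α : ℝ) {β lam : ℝ}
    (hβ : ∀ k : ℕ, β ≠ k) (hlam : 0 < lam) (z : ℂ) (n : ℕ) :
    (temperedStableCumulant α β lam n : ℂ) * z ^ n / n.factorial
      = α * Real.Gamma (-β) * (Ring.choose (β : ℂ) n * (lam : ℂ) ^ (β : ℂ) * (-z / lam) ^ n) := by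
  have hlam' : (lam : ℂ) ≠ 0 := ofReal_ne_zero.mpr hlam.ne'
  have hfact : (n.factorial : ℂ) ≠ 0 := Nat.cast_ne_zero.mpr n.factorial_ne_zero
  rw [temperedStableCumulant, Real.Gamma_natCast_sub hβ, Real.rpow_sub hlam, Real.rpow_natCast,
    ← ofReal_cpow hlam.le, ← ofReal_choose, div_pow, neg_pow]
  push_cast
  field_simp
  ring

theorem hasSum_temperedStableCumulant (α : ℝ) {β lam : ℝ} (hβ : ∀ k : ℕ, β ≠ k)
    (hlam : 0 < lam) {z : ℂ} (hz : ‖z‖ < lam) :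
    HasSum (fun n => (temperedStableCumulant α β lam (n + 1) : ℂ) * z ^ (n + 1)
        / (n + 1).factorial)
      (α * Real.Gamma (-β) * (((lam : ℂ) - z) ^ (β : ℂ) - (lam : ℂ) ^ (β : ℂ))) := by
  have h := (hasSum_choose_mul_cpow β hlam (y := -z) (by rwa [norm_neg])).mul_left
    ((α : ℂ) * Real.Gamma (-β))
  rw [← hasSum_nat_add_iff' 1] at h
  simp only [Finset.sum_range_one, Ring.choose_zero_right, pow_zero, one_mul, mul_one,
    ← sub_eq_add_neg, ← mul_sub] at h
  simpa only [temperedStableCumulant_mul_pow_div_factorial α hβ hlam] using h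

theorem summable_norm_temperedStableCumulant (α : ℝ) {β lam : ℝ} (hβ : ∀ k : ℕ, β ≠ k)
    (hlam : 0 < lam) {z : ℂ} (hz : ‖z‖ < lam) :
    Summable fun n => ‖(temperedStableCumulant α β lam (n + 1) : ℂ) * z ^ (n + 1)
        / (n + 1).factorial‖ := by
  have hx : ‖-z / lam‖ < 1 := by
    rwa [norm_div, norm_neg, norm_real, Real.norm_of_nonneg hlam.le, div_lt_one hlam]
  have h := ((summable_nat_add_iff 1).mpr (summable_norm_choose_mul_pow (β : ℂ) hx)).mul_left
    ‖(α : ℂ) * Real.Gamma (-β) * (lam : ℂ) ^ (β : ℂ)‖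
  refine h.congr fun n => ?_
  rw [temperedStableCumulant_mul_pow_div_factorial α hβ hlam, ← norm_mul]
  congr 1
  ring

theorem ne_natCast_of_pos_of_lt_one {β : ℝ} (h0 : 0 < β) (h1 : β < 1) (k : ℕ) : β ≠ k := by
  rintro rfl
  norm_cast at h0 h1
  omega

theorem GTS_cumulant_series_general (βp βm αp αm lamp lamm μ : ℝ)
    (hβp0 : 0 < βp) (hβp1 : βp < 1) (hβm0 : 0 < βm) (hβm1 : βm < 1)
    (hlamp : 0 < lamp) (hlamm : 0 < lamm)
    (Ψ : ℝ → ℂ)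
    (hΨ : ∀ ξ : ℝ, Ψ ξ
      = (μ * ξ : ℂ) * Complex.I
        + (αp : ℂ) * (Real.Gamma (-βp) : ℂ) *
            (((lamp : ℂ) - Complex.I * ξ) ^ (βp : ℂ) - (lamp : ℂ) ^ (βp : ℂ))
        + (αm : ℂ) * (Real.Gamma (-βm) : ℂ) *
            (((lamm : ℂ) + Complex.I * ξ) ^ (βm : ℂ) - (lamm : ℂ) ^ (βm : ℂ)))
    (κ : ℕ → ℝ)
    (hκ1 : κ 1 = μ + αp * Real.Gamma (1 - βp) / lamp ^ (1 - βp)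
        - αm * Real.Gamma (1 - βm) / lamm ^ (1 - βm))
    (hκk : ∀ k : ℕ, 2 ≤ k →
      κ k = αp * Real.Gamma ((k : ℝ) - βp) / lamp ^ ((k : ℝ) - βp)
        + (-1 : ℝ) ^ k * αm * Real.Gamma ((k : ℝ) - βm) / lamm ^ ((k : ℝ) - βm)) :
    ∀ ξ : ℝ, |ξ| < min lamp lamm →
      Summable (fun k : ℕ =>
        ‖(κ (k + 1) : ℂ) * (Complex.I * ξ) ^ (k + 1) / ((k + 1).factorial : ℂ)‖) ∧
      Ψ ξ = ∑' k : ℕ,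
          (κ (k + 1) : ℂ) * (Complex.I * ξ) ^ (k + 1) / ((k + 1).factorial : ℂ) := by
  intro ξ hξ
  have hβp := ne_natCast_of_pos_of_lt_one hβp0 hβp1
  have hβm := ne_natCast_of_pos_of_lt_one hβm0 hβm1
  set z : ℂ := Complex.I * ξ
  have hzp : ‖z‖ < lamp := by simpa [z] using hξ.trans_le (min_le_left _ _)
  have hzm : ‖-z‖ < lamm := by simpa [z] using hξ.trans_le (min_le_right _ _)
  set drift : ℕ → ℂ := fun n => if n = 0 then (μ : ℂ) * z else 0
  have hdrift : HasSum drift (μ * z) := hasSum_ite_eq 0 _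
  -- `κ₁` is the `k = 1` case of the formula for `κₖ`, plus the drift `μ`.
  have hterm : ∀ n : ℕ, (κ (n + 1) : ℂ) * z ^ (n + 1) / (n + 1).factorial
      = drift n + (temperedStableCumulant αp βp lamp (n + 1) : ℂ) * z ^ (n + 1) / (n + 1).factorial
        + (temperedStableCumulant αm βm lamm (n + 1) : ℂ) * (-z) ^ (n + 1) / (n + 1).factorial := by
    rintro (_ | n)
    · simp only [zero_add, hκ1, ofReal_sub, ofReal_add, ofReal_div, ofReal_mul, pow_one,
        Nat.factorial_one, Nat.cast_one, div_one, ↓reduceIte, temperedStableCumulant, mul_neg,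
        drift]
      ring
    · simp only [drift, hκk (n + 1 + 1) (by omega), temperedStableCumulant, neg_pow z]
      push_cast
      ring
  have hsum := ((hdrift.add (hasSum_temperedStableCumulant αp hβp hlamp hzp)).add
    (hasSum_temperedStableCumulant αm hβm hlamm hzm)).congr_fun hterm
  refine ⟨?_, ?_⟩
  · have hdrift_norm : Summable fun n => ‖drift n‖ :=
      summable_of_ne_finset_zero (s := {0}) fun n hn => by simp_all [drift]
    refine Summable.of_nonneg_of_le (fun _ => norm_nonneg _)
      (fun n => by rw [hterm n]; exact norm_add₃_le)
      ((hdrift_norm.add (summable_norm_temperedStableCumulant αp hβp hlamp hzp)).add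
        (summable_norm_temperedStableCumulant αm hβm hlamm hzm))
  · rw [hsum.tsum_eq, hΨ ξ, sub_neg_eq_add]
    ring

/-- Cumulant expansion of the GTS characteristic exponent: for `|ξ| < min(λ₊, λ₋)`,
`Ψ(ξ) = Σ_{j≥1} κ_j (iξ)^j / j!`, converging absolutely, where the `κ_k` are the
cumulants of the GTS distribution. -/
theorem GTS_cumulant_series (βp βm αp αm lamp lamm μ : ℝ)
    (hβp0 : 0 < βp) (hβp1 : βp < 1) (hβm0 : 0 < βm) (hβm1 : βm < 1)
    (hαp : 0 < αp) (hαm : 0 < αm) (hlamp : 0 < lamp) (hlamm : 0 < lamm)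
    (Ψ : ℝ → ℂ)
    (hΨ : ∀ ξ : ℝ, Ψ ξ
      = (μ * ξ : ℂ) * Complex.I
        + (αp : ℂ) * (Real.Gamma (-βp) : ℂ) *
            (((lamp : ℂ) - Complex.I * ξ) ^ (βp : ℂ) - (lamp : ℂ) ^ (βp : ℂ))
        + (αm : ℂ) * (Real.Gamma (-βm) : ℂ) *
            (((lamm : ℂ) + Complex.I * ξ) ^ (βm : ℂ) - (lamm : ℂ) ^ (βm : ℂ)))
    (κ : ℕ → ℝ)
    (hκ1 : κ 1 = μ + αp * Real.Gamma (1 - βp) / lamp ^ (1 - βp)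
        - αm * Real.Gamma (1 - βm) / lamm ^ (1 - βm))
    (hκk : ∀ k : ℕ, 2 ≤ k →
      κ k = αp * Real.Gamma ((k : ℝ) - βp) / lamp ^ ((k : ℝ) - βp)
        + (-1 : ℝ) ^ k * αm * Real.Gamma ((k : ℝ) - βm) / lamm ^ ((k : ℝ) - βm)) :
    ∀ ξ : ℝ, |ξ| < min lamp lamm →
      Summable (fun k : ℕ =>
        ‖(κ (k + 1) : ℂ) * (Complex.I * ξ) ^ (k + 1) / ((k + 1).factorial : ℂ)‖) ∧
      Ψ ξ = ∑' k : ℕ,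
          (κ (k + 1) : ℂ) * (Complex.I * ξ) ^ (k + 1) / ((k + 1).factorial : ℂ) :=
  GTS_cumulant_series_general βp βm αp αm lamp lamm μ hβp0 hβp1 hβm0 hβm1 hlamp hlamm Ψ hΨ κ hκ1 hκk
end
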